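/- arXiv:2203.06423 — 7 statements merged into one kernel-verified Lean document; each statement's English description precedes it below -/
import Mathlib

section
/- Let G be a ((K1 ∪ K2) + Kp)-free graph with clique number ω(G) ≥ p+2 for some p ≥ 1, and let A = {v1,...,vω} be a maximum clique of G. For each k, let I_k be the set of vertices outside A adjacent to every vertex of A except v_k. Then for any k ≠ ℓ, every vertex of I_k is adjacent to every vertex of I_ℓ. -/
open SimpleGraph

/-- The join of two graphs: all cross edges present. -/
def joinG {α β : Type*} (G : SimpleGraph α) (H : SimpleGraph β) : SimpleGraph (α ⊕ β) :=
  SimpleGraph.fromRel (fun x y => match x, y with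
    | Sum.inl a, Sum.inl b => G.Adj a b
    | Sum.inr a, Sum.inr b => H.Adj a b
    | Sum.inl _, Sum.inr _ => True
    | _, _ => False)

/-- The graph `P₃ ∪ P₂`: disjoint union of a path on 3 vertices and an edge. -/
def P3P2 : SimpleGraph (Fin 3 ⊕ Fin 2) := pathGraph 3 ⊕g pathGraph 2

/-- The graph `K₁ ∪ K₂`: disjoint union of a vertex and an edge. -/
def K1K2 : SimpleGraph (Fin 1 ⊕ Fin 2) := (⊥ : SimpleGraph (Fin 1)) ⊕g (⊤ : SimpleGraph (Fin 2))

/-- The graph `(K₁ ∪ K₂) + Kₚ`: join of `K₁ ∪ K₂` with a complete graph on `p` vertices. -/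
def K1K2Kp (p : ℕ) : SimpleGraph ((Fin 1 ⊕ Fin 2) ⊕ Fin p) := joinG K1K2 (⊤ : SimpleGraph (Fin p))

/-- The graph `2K₁ + Kₚ`: join of two isolated vertices with a complete graph on `p` vertices. -/
def twoK1Kp (p : ℕ) : SimpleGraph (Fin 2 ⊕ Fin p) :=
  joinG (⊥ : SimpleGraph (Fin 2)) (⊤ : SimpleGraph (Fin p))

/-- The HVN graph: `(K₁ ∪ K₂) + K₂`. -/
def HVN : SimpleGraph ((Fin 1 ⊕ Fin 2) ⊕ Fin 2) := K1K2Kp 2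

/-- The diamond: `2K₁ + K₂`, i.e. `K₄` minus an edge. -/
def diamond : SimpleGraph (Fin 2 ⊕ Fin 2) := twoK1Kp 2

/-- The paw: `(K₁ ∪ K₂) + K₁`. -/
def paw : SimpleGraph ((Fin 1 ⊕ Fin 2) ⊕ Fin 1) := K1K2Kp 1

/-- `G` is `H`-free if it has no induced subgraph isomorphic to `H`,
i.e. there is no graph embedding of `H` into `G`. -/
def Free {α β : Type*} (H : SimpleGraph α) (G : SimpleGraph β) : Prop :=
  ¬ Nonempty (H ↪g G)

/-! If `x` and `y` were non-adjacent, then `y` misses `v ℓ` (else `A ∪ {y}` would be a larger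
clique) while `x` sees it. Any `p` vertices of `A ∖ {v k, v ℓ}` are adjacent to `y`, `x` and `v ℓ`,
so together with the vertex `y` and the edge `x v ℓ` they induce `(K₁ ∪ K₂) + Kₚ`. -/

section

variable {α β : Type*} {H : SimpleGraph α} {K : SimpleGraph β}

@[simp] theorem joinG_adj_inl_inl {a b : α} : (joinG H K).Adj (.inl a) (.inl b) ↔ H.Adj a b := by
  simp only [joinG, fromRel_adj, ne_eq, Sum.inl.injEq]
  exact ⟨fun h => h.2.elim id H.adj_symm, fun h => ⟨H.ne_of_adj h, .inl h⟩⟩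

@[simp] theorem joinG_adj_inr_inr {a b : β} : (joinG H K).Adj (.inr a) (.inr b) ↔ K.Adj a b := by
  simp only [joinG, fromRel_adj, ne_eq, Sum.inr.injEq]
  exact ⟨fun h => h.2.elim id K.adj_symm, fun h => ⟨K.ne_of_adj h, .inl h⟩⟩

@[simp] theorem joinG_adj_inl_inr {a : α} {b : β} : (joinG H K).Adj (.inl a) (.inr b) := by
  simp [joinG, fromRel_adj]

@[simp] theorem joinG_adj_inr_inl {a : β} {b : α} : (joinG H K).Adj (.inr a) (.inl b) :=
  joinG_adj_inl_inr.symm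

end

namespace SimpleGraph

variable {V α β : Type*} {G : SimpleGraph V} {H : SimpleGraph α} {K : SimpleGraph β}

namespace Embedding

def ofPairwiseAdj (f : α → V) (h : Pairwise fun a b => G.Adj (f a) (f b)) :
    (⊤ : SimpleGraph α) ↪g G where
  toFun := f
  inj' a b hab := by_contra fun hne => G.ne_of_adj (h hne) hab
  map_rel_iff' := ⟨by rintro hab rfl; exact G.irrefl hab, fun hab => h hab⟩

def ofPairwiseNotAdj (f : α ↪ V) (h : Pairwise fun a b => ¬G.Adj (f a) (f b)) :
    (⊥ : SimpleGraph α) ↪g G where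
  toEmbedding := f
  map_rel_iff' := ⟨fun hab => (h (G.ne_of_adj hab |> f.injective.ne_iff.mp) hab).elim,
    False.elim⟩

def sumElim (f : H ↪g G) (g : K ↪g G) (hne : ∀ a b, f a ≠ g b)
    (hadj : ∀ a b, ¬G.Adj (f a) (g b)) : H ⊕g K ↪g G where
  toFun := Sum.elim f g
  inj' := by
    rintro (a | a) (b | b) hab
    · exact congrArg _ (f.injective hab)
    · exact (hne a b hab).elim
    · exact (hne b a hab.symm).elim
    · exact congrArg _ (g.injective hab)
  map_rel_iff' {a b} := by
    change G.Adj (Sum.elim f g a) (Sum.elim f g b) ↔ _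
    rcases a with a | a <;> rcases b with b | b
    · simp
    · simpa using hadj a b
    · simpa [G.adj_comm] using hadj b a
    · simp

def join (f : H ↪g G) (g : K ↪g G) (hadj : ∀ a b, G.Adj (f a) (g b)) : joinG H K ↪g G where
  toFun := Sum.elim f g
  inj' := by
    rintro (a | a) (b | b) hab
    · exact congrArg _ (f.injective hab)
    · exact (G.ne_of_adj (hadj a b) hab).elim
    · exact (G.ne_of_adj (hadj b a) hab.symm).elim
    · exact congrArg _ (g.injective hab)
  map_rel_iff' {a b} := by
    change G.Adj (Sum.elim f g a) (Sum.elim f g b) ↔ _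
    rcases a with a | a <;> rcases b with b | b
    · simp
    · simpa using hadj a b
    · simpa using (hadj b a).symm
    · simp

end Embedding

theorem exists_not_adj_of_card_eq_cliqueNum [Fintype V] [Fintype α] {v : α → V}
    (hinj : Function.Injective v) (hclique : G.IsClique (Set.range v))
    (hcard : Fintype.card α = G.cliqueNum) (w : V) : ∃ i, ¬G.Adj w (v i) := by
  classical
  by_contra! hw
  let s := Finset.univ.map ⟨v, hinj⟩
  have hws : w ∉ s := by simpa [s] using fun i => (G.ne_of_adj (hw i)).symm
  have hclique' : G.IsClique (insert w s : Finset V) := by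
    rw [Finset.coe_insert, isClique_insert]
    exact ⟨by simpa [s] using hclique, by simp [s, hw]⟩
  have := hclique'.card_le_cliqueNum
  rw [Finset.card_insert_of_notMem hws, Finset.card_map, Finset.card_univ] at this
  omega

theorem nonempty_K1K2Kp_embedding {p : ℕ} {x y z : V} (c : Fin p → V)
    (hc : Pairwise fun i j => G.Adj (c i) (c j)) (hxz : G.Adj x z) (hyx : ¬G.Adj y x)
    (hyz : ¬G.Adj y z) (hyc : ∀ i, G.Adj y (c i)) (hxc : ∀ i, G.Adj x (c i))
    (hzc : ∀ i, G.Adj z (c i)) : Nonempty (K1K2Kp p ↪g G) := by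
  let vertex : (⊥ : SimpleGraph (Fin 1)) ↪g G :=
    Embedding.ofPairwiseNotAdj ⟨fun _ => y, Function.injective_of_subsingleton _⟩
      Subsingleton.pairwise
  let edge : (⊤ : SimpleGraph (Fin 2)) ↪g G := Embedding.ofPairwiseAdj ![x, z] fun i j hij => by
    fin_cases i <;> fin_cases j <;> simp_all [hxz.symm]
  refine ⟨Embedding.join (Embedding.sumElim vertex edge ?_ ?_) (Embedding.ofPairwiseAdj c hc) ?_⟩
  · intro _ i
    fin_cases i
    · exact fun h : y = x => hyz (h ▸ hxz)
    · exact fun h : y = z => hyx (h ▸ hxz.symm)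
  · intro _ i
    fin_cases i
    exacts [hyx, hyz]
  · rintro (_ | i) j
    · exact hyc j
    · fin_cases i
      exacts [hxc j, hzc j]

end SimpleGraph

theorem stmt_1_general {V : Type*} [Fintype V] (G : SimpleGraph V) (p : ℕ)
    (hfree : _root_.Free (K1K2Kp p) G) (hω : p + 2 ≤ G.cliqueNum)
    (v : Fin G.cliqueNum → V) (hinj : Function.Injective v)
    (hclique : G.IsClique (Set.range v))
    (k ℓ : Fin G.cliqueNum) (hkl : k ≠ ℓ) (x y : V)
    (hx : ∀ i, i ≠ k → G.Adj x (v i))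
    (hy : ∀ i, i ≠ ℓ → G.Adj y (v i)) :
    G.Adj x y := by
  by_contra hxy
  have hA : ∀ i j, i ≠ j → G.Adj (v i) (v j) := fun i j hij =>
    hclique (Set.mem_range_self i) (Set.mem_range_self j) (hinj.ne hij)
  have hyℓ : ¬G.Adj y (v ℓ) := fun h => by
    obtain ⟨i, hi⟩ := exists_not_adj_of_card_eq_cliqueNum hinj hclique (Fintype.card_fin _) y
    exact hi (if hiℓ : i = ℓ then hiℓ ▸ h else hy i hiℓ)
  obtain ⟨c, hc⟩ := Function.Embedding.exists_of_card_le_finset (α := Fin p)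
    (s := ({k, ℓ}ᶜ : Finset (Fin G.cliqueNum))) (by
      rw [Finset.card_compl, Finset.card_pair hkl, Fintype.card_fin, Fintype.card_fin]; omega)
  have hck : ∀ i, c i ≠ k ∧ c i ≠ ℓ := fun i => by
    simpa only [Finset.coe_compl, Set.mem_compl_iff, Finset.mem_coe, Finset.mem_insert,
      Finset.mem_singleton, not_or] using hc (Set.mem_range_self i)
  exact hfree <| nonempty_K1K2Kp_embedding (v ∘ c) (fun i j hij => hA _ _ (c.injective.ne hij))
    (hx ℓ hkl.symm) (fun h => hxy h.symm) hyℓ (fun j => hy _ (hck j).2) (fun j => hx _ (hck j).1)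
    (fun j => hA _ _ (hck j).2.symm)

theorem stmt_1 {V : Type*} [Fintype V] (G : SimpleGraph V) (p : ℕ) (hp : 1 ≤ p)
    (hfree : _root_.Free (K1K2Kp p) G) (hω : p + 2 ≤ G.cliqueNum)
    (v : Fin G.cliqueNum → V) (hinj : Function.Injective v)
    (hclique : G.IsClique (Set.range v))
    (k ℓ : Fin G.cliqueNum) (hkl : k ≠ ℓ) (x y : V)
    (hxA : x ∉ Set.range v) (hx : ∀ i, i ≠ k → G.Adj x (v i))
    (hyA : y ∉ Set.range v) (hy : ∀ i, i ≠ ℓ → G.Adj y (v i)) :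
    G.Adj x y :=
  stmt_1_general G p hfree hω v hinj hclique k ℓ hkl x y hx hy
end

section
/- Let G be a connected graph. Then G is paw-free if and only if G is triangle-free or complete multipartite. -/
open SimpleGraph

/-- `G` is complete multipartite: its vertex set can be partitioned into (independent) parts
such that two vertices are adjacent iff they lie in different parts. -/
def IsCompleteMultipartite {V : Type*} (G : SimpleGraph V) : Prop :=
  ∃ r : Setoid V, ∀ x y, G.Adj x y ↔ ¬ r x y

/-
In a paw-free graph, a vertex adjacent to one vertex of a triangle is adjacent to a second one.
So if `a` sees a triangle `xyz`, it sees two of its vertices `p, q`, and every neighbour of `a`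
sees the triangle `apq`, hence `xyz`: by connectivity every vertex sees at least two vertices of
`xyz`. Then any two vertices have a common neighbour, so every edge `ac` lies in a triangle, and
every vertex is adjacent to `a` or `c`; that is, non-adjacency is transitive. Conversely, a paw
contains a triangle, and its pendant vertex is non-adjacent to two adjacent vertices.
-/

namespace SimpleGraph

variable {V : Type*} {G : SimpleGraph V}

theorem Reachable.induction_on_adj {P : V → Prop} {u v : V} (h : G.Reachable u v)
    (hu : P u) (hadj : ∀ a b, G.Adj a b → P a → P b) : P v := by
  obtain ⟨p⟩ := h
  induction p with
  | nil => exact hu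
  | cons hab _ ih => exact ih (hadj _ _ hab hu)

theorem isCompleteMultipartite_iff_exists_setoid :
    G.IsCompleteMultipartite ↔ _root_.IsCompleteMultipartite G := by
  refine ⟨fun h => ⟨h.setoid, fun _ _ => not_not.symm⟩, fun ⟨r, hr⟩ => ⟨fun a b c hab hbc => ?_⟩⟩
  simp only [hr, not_not] at hab hbc ⊢
  exact r.trans hab hbc

theorem nonempty_paw_embedding_iff : Nonempty (paw ↪g G) ↔
    ∃ a b c d, G.Adj d a ∧ G.Adj d b ∧ G.Adj d c ∧ G.Adj b c ∧ ¬ G.Adj a b ∧ ¬ G.Adj a c := by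
  constructor
  · rintro ⟨f⟩
    refine ⟨f (.inl (.inl 0)), f (.inl (.inr 0)), f (.inl (.inr 1)), f (.inr 0), ?_⟩
    simp only [f.map_adj_iff]
    simp [paw, K1K2Kp, joinG, K1K2]
  · rintro ⟨a, b, c, d, hda, hdb, hdc, hbc, hab, hac⟩
    have hne : a ≠ b ∧ a ≠ c ∧ a ≠ d ∧ b ≠ c ∧ b ≠ d ∧ c ≠ d := by
      refine ⟨?_, ?_, hda.ne.symm, hbc.ne, hdb.ne.symm, hdc.ne.symm⟩ <;> rintro rfl
      exacts [hac hbc, hab hbc.symm]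
    let f : (Fin 1 ⊕ Fin 2) ⊕ Fin 1 → V := Sum.elim (Sum.elim (fun _ => a) ![b, c]) fun _ => d
    refine ⟨⟨⟨f, ?_⟩, fun {x y} => ?_⟩⟩
    · rintro ((i | i) | i) ((j | j) | j) h <;> fin_cases i <;> fin_cases j <;> simp_all [f]
    · change G.Adj (f x) (f y) ↔ paw.Adj x y
      rcases x with (i | i) | i <;> rcases y with (j | j) | j <;> fin_cases i <;> fin_cases j <;>
        simp [f, paw, K1K2Kp, joinG, K1K2, hda, hdb, hdc, hbc, hab, hac, hda.symm, hdb.symm,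
          hdc.symm, hbc.symm, G.adj_comm b a, G.adj_comm c a]

theorem CliqueFree.free_paw (h : G.CliqueFree 3) : _root_.Free paw G := by
  rw [_root_.Free, nonempty_paw_embedding_iff]
  classical
  rintro ⟨a, b, c, d, -, hdb, hdc, hbc, -⟩
  exact h {d, b, c} (is3Clique_triple_iff.2 ⟨hdb, hdc, hbc⟩)

theorem IsCompleteMultipartite.free_paw (h : G.IsCompleteMultipartite) : _root_.Free paw G := by
  rw [_root_.Free, nonempty_paw_embedding_iff]
  rintro ⟨a, b, c, d, -, -, -, hbc, hab, hac⟩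
  exact h.setoid.trans (h.setoid.symm hab) hac hbc

end SimpleGraph

namespace Free

variable {V : Type*} {G : SimpleGraph V} {x y z : V}

theorem adj_or_adj_of_adj (hG : _root_.Free paw G) (hxy : G.Adj x y) (hxz : G.Adj x z)
    (hyz : G.Adj y z) {v : V} (hv : G.Adj x v) : G.Adj v y ∨ G.Adj v z := by
  by_contra! h
  exact hG (nonempty_paw_embedding_iff.2 ⟨v, y, z, x, hv, hxy, hxz, hyz, h⟩)

theorem adj_or_adj_or_adj (hG : _root_.Free paw G) (hconn : G.Preconnected) (hxy : G.Adj x y)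
    (hxz : G.Adj x z) (hyz : G.Adj y z) (v : V) : G.Adj v x ∨ G.Adj v y ∨ G.Adj v z := by
  refine (hconn x v).induction_on_adj (P := fun w => G.Adj w x ∨ G.Adj w y ∨ G.Adj w z)
    (.inr (.inl hxy)) fun a b hab ha => ?_
  rcases ha with hax | hay | haz
  · rcases hG.adj_or_adj_of_adj hxy hxz hyz hax.symm with hay | haz
    · have := hG.adj_or_adj_of_adj hax hay hxy hab; tauto
    · have := hG.adj_or_adj_of_adj hax haz hxz hab; tauto
  · rcases hG.adj_or_adj_of_adj hxy.symm hyz hxz hay.symm with hax | haz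
    · have := hG.adj_or_adj_of_adj hax hay hxy hab; tauto
    · have := hG.adj_or_adj_of_adj hay haz hyz hab; tauto
  · rcases hG.adj_or_adj_of_adj hxz.symm hyz.symm hxy haz.symm with hax | hay
    · have := hG.adj_or_adj_of_adj hax haz hxz hab; tauto
    · have := hG.adj_or_adj_of_adj hay haz hyz hab; tauto

theorem adj_or_adj (hG : _root_.Free paw G) (hconn : G.Preconnected) (hxy : G.Adj x y)
    (hxz : G.Adj x z) (hyz : G.Adj y z) (v : V) : G.Adj v x ∨ G.Adj v y := by
  rcases hG.adj_or_adj_or_adj hconn hxy hxz hyz v with h | h | h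
  · exact .inl h
  · exact .inr h
  · exact hG.adj_or_adj_of_adj hxz.symm hyz.symm hxy h.symm

theorem exists_adj_adj (hG : _root_.Free paw G) (hconn : G.Preconnected) (hxy : G.Adj x y)
    (hxz : G.Adj x z) (hyz : G.Adj y z) (u v : V) : ∃ w, G.Adj u w ∧ G.Adj v w := by
  have := hG.adj_or_adj hconn hxy hxz hyz u
  have := hG.adj_or_adj hconn hxz.symm hyz.symm hxy u
  have := hG.adj_or_adj hconn hyz hxy.symm hxz.symm u
  have := hG.adj_or_adj hconn hxy hxz hyz v
  have := hG.adj_or_adj hconn hxz.symm hyz.symm hxy v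
  have := hG.adj_or_adj hconn hyz hxy.symm hxz.symm v
  by_contra! h
  have := h x; have := h y; have := h z
  tauto

theorem isCompleteMultipartite (hG : _root_.Free paw G) (hconn : G.Preconnected)
    (h : ¬ G.CliqueFree 3) : G.IsCompleteMultipartite := by
  classical
  obtain ⟨s, hs⟩ : ∃ s, G.IsNClique 3 s := by simpa [CliqueFree] using h
  obtain ⟨x, y, z, hxy, hxz, hyz, -⟩ := is3Clique_iff.1 hs
  refine ⟨fun a b c hab hbc hac => ?_⟩
  obtain ⟨w, haw, hcw⟩ := hG.exists_adj_adj hconn hxy hxz hyz a c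
  rcases hG.adj_or_adj hconn hac haw hcw b with hba | hbc'
  exacts [hab hba.symm, hbc hbc']

end Free

theorem stmt_4_general {V : Type*} (G : SimpleGraph V) (hconn : G.Connected) :
    _root_.Free paw G ↔ (G.CliqueFree 3 ∨ _root_.IsCompleteMultipartite G) := by
  rw [← isCompleteMultipartite_iff_exists_setoid]
  refine ⟨fun hG => ?_, ?_⟩
  · by_cases h : G.CliqueFree 3
    · exact .inl h
    · exact .inr (hG.isCompleteMultipartite hconn.preconnected h)
  · rintro (h | h)
    exacts [h.free_paw, h.free_paw]

theorem stmt_4 {V : Type*} [Fintype V] (G : SimpleGraph V) (hconn : G.Connected) :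
    _root_.Free paw G ↔ (G.CliqueFree 3 ∨ _root_.IsCompleteMultipartite G) :=
  stmt_4_general G hconn
end

section
/- For every p ≥ 1 and ω ≥ p+1, there exists a {P3 ∪ P2, (K1 ∪ K2) + Kp}-free graph G* with clique number ω, independence number 2, and exactly 2ω + p − 1 vertices, so that χ(G*) ≥ ω + ⌈(p−1)/2⌉. -/
open SimpleGraph

/-!
Write `x_i = inl (false, i)`, `y_i = inl (true, i)` (`i < ω`) and `z_k = inr k` (`k < p - 1`).
Inside either half `{inl (c, i)} ∪ Z`, two distinct vertices are adjacent iff their indices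
differ, while `x_i y_j` is an edge only for `i = j < p - 1`. A clique meeting both `X` and `Y`
therefore has at most `p` vertices, and every larger clique lies in a half, on which the index is
injective; this gives `ω(G*) = ω`. In an induced `(K₁ ∪ K₂) + K_p` with isolated vertex `u`, the
other `p + 2` vertices form a clique inside one half. If `u` belonged to that half, its index would
equal the indices of both ends of the `K₂`; otherwise its `p` neighbours in the clique all have
index `< p - 1`. Finally `G*` has no independent triple, which excludes `P₃ ∪ P₂` and forces
`χ(G*) ≥ ⌈|G*| / 2⌉`.
-/

open Finset

section GraphFacts

variable {α β : Type*} {G : SimpleGraph α} {H : SimpleGraph β}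

theorem SimpleGraph.IsClique.card_lt_of_cliqueFree {n : ℕ} {s : Finset α} (hs : G.IsClique s)
    (hG : G.CliqueFree n) : #s < n := by
  by_contra! hn
  obtain ⟨t, hts, rfl⟩ := exists_subset_card_eq hn
  exact hG t ⟨hs.subset hts, rfl⟩

theorem SimpleGraph.cliqueNum_eq_of_isNClique_of_cliqueFree [Finite α] {k : ℕ} {s : Finset α}
    (hs : G.IsNClique k s) (hG : G.CliqueFree (k + 1)) : G.cliqueNum = k := by
  obtain ⟨t, ht⟩ := G.exists_isNClique_cliqueNum
  refine le_antisymm ?_ (hs.card_eq ▸ IsClique.card_le_cliqueNum (tc := hs.isClique))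
  exact Nat.lt_succ_iff.mp (ht.card_eq ▸ ht.isClique.card_lt_of_cliqueFree hG)

theorem SimpleGraph.Embedding.isClique_finsetMap (f : G ↪g H) {s : Finset α}
    (hs : G.IsClique s) : H.IsClique (s.map f.toEmbedding) := by
  rw [IsClique, coe_map]
  exact Set.Pairwise.image (hs.imp fun _ _ h => f.map_adj_iff.mpr h)

theorem SimpleGraph.Embedding.cliqueNum_le [Finite β] (f : G ↪g H) :
    G.cliqueNum ≤ H.cliqueNum := by
  obtain ⟨s, hs⟩ := G.exists_isNClique_cliqueNum
  calc G.cliqueNum = #(s.map f.toEmbedding) := by rw [card_map, hs.card_eq]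
    _ ≤ H.cliqueNum := IsClique.card_le_cliqueNum (tc := f.isClique_finsetMap hs.isClique)

theorem SimpleGraph.Iso.cliqueNum_eq [Finite α] [Finite β] (e : G ≃g H) :
    G.cliqueNum = H.cliqueNum :=
  le_antisymm e.toEmbedding.cliqueNum_le e.symm.toEmbedding.cliqueNum_le

def SimpleGraph.Iso.compl (e : G ≃g H) : Gᶜ ≃g Hᶜ where
  toEquiv := e.toEquiv
  map_rel_iff' := (Embedding.complEquiv e.toEmbedding).map_rel_iff'

theorem Free.of_embedding {γ : Type*} {F : SimpleGraph γ} (hH : _root_.Free F H) (f : G ↪g H) :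
    _root_.Free F G :=
  fun ⟨g⟩ => hH ⟨f.comp g⟩

theorem SimpleGraph.Colorable.card_le_mul_of_cliqueFree_compl [Fintype α] {k n : ℕ}
    (hG : Gᶜ.CliqueFree (k + 1)) (hc : G.Colorable n) : Fintype.card α ≤ k * n := by
  classical
  obtain ⟨C⟩ := hc
  have hclass (c : Fin n) : #{v | C v = c} ≤ k := by
    refine Nat.lt_succ_iff.mp (IsClique.card_lt_of_cliqueFree ?_ hG)
    intro v hv w hw hvw
    simp only [coe_filter, mem_univ, true_and, Set.mem_ofPred_eq] at hv hw
    exact (compl_adj G v w).mpr ⟨hvw, fun h => C.valid h (hv.trans hw.symm)⟩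
  calc Fintype.card α = ∑ c : Fin n, #{v | C v = c} :=
        card_eq_sum_card_fiberwise fun v _ => mem_univ (C v)
    _ ≤ ∑ _c : Fin n, k := sum_le_sum fun c _ => hclass c
    _ = k * n := by simp [mul_comm]

theorem SimpleGraph.le_chromaticNumber_of_cliqueFree_compl [Fintype α] (hG : Gᶜ.CliqueFree 3) :
    (((Fintype.card α + 1) / 2 : ℕ) : ℕ∞) ≤ G.chromaticNumber :=
  le_chromaticNumber_iff_colorable.mpr fun n hn => by
    have := hn.card_le_mul_of_cliqueFree_compl hG
    exact_mod_cast (by omega)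

theorem free_P3P2_of_cliqueFree_compl (hG : Gᶜ.CliqueFree 3) : _root_.Free P3P2 G := by
  rintro ⟨f⟩
  refine (hG.comap (Embedding.complEquiv f).isContained) {.inl 0, .inl 2, .inr 0} ⟨?_, rfl⟩
  simp [IsClique, Set.Pairwise, P3P2, pathGraph_adj]

theorem isClique_erase_K1K2Kp (p : ℕ) :
    (K1K2Kp p).IsClique ↑(univ.erase (.inl (.inl 0) : (Fin 1 ⊕ Fin 2) ⊕ Fin p)) := by
  rintro ((x | x) | x) hx ((y | y) | y) hy hxy <;>
    simp_all [K1K2Kp, joinG, K1K2, Fin.fin_one_eq_zero]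

end GraphFacts

namespace GStar

variable {p ω : ℕ}

abbrev Vertex (p ω : ℕ) := (Bool × Fin ω) ⊕ Fin (p - 1)

def Adj : Vertex p ω → Vertex p ω → Prop
  | .inl (b, i), .inl (c, j) => b = c ∧ i ≠ j ∨ b ≠ c ∧ i = j ∧ (i : ℕ) < p - 1
  | .inl (_, i), .inr k => (i : ℕ) ≠ k
  | .inr k, .inl (_, i) => (i : ℕ) ≠ k
  | .inr k, .inr l => k ≠ l

variable (p ω) in
def graph : SimpleGraph (Vertex p ω) where
  Adj := Adj
  symm := ⟨by rintro (⟨b, i⟩ | k) (⟨c, j⟩ | l) h <;> simp only [Adj] at h ⊢ <;> grind⟩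
  loopless := ⟨by rintro (⟨b, i⟩ | k) h <;> simp [Adj] at h⟩

def index : Vertex p ω → ℕ
  | .inl (_, i) => i
  | .inr k => k

theorem index_lt (hω : p - 1 ≤ ω) (v : Vertex p ω) : index v < ω := by
  rcases v with ⟨_, i⟩ | k
  · exact i.isLt
  · exact Nat.lt_of_lt_of_le k.isLt hω

def InHalf (c : Bool) : Vertex p ω → Prop
  | .inl (b, _) => b = c
  | .inr _ => True

theorem exists_eq_inl_of_not_inHalf {c : Bool} {w : Vertex p ω} (hw : ¬InHalf c w) :
    ∃ j, w = .inl (!c, j) := by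
  rcases w with ⟨b, j⟩ | l
  · exact ⟨j, by simp_all [InHalf, Bool.eq_not]⟩
  · exact absurd trivial hw

theorem adj_iff_index_ne {c : Bool} {v w : Vertex p ω} (hv : InHalf c v) (hw : InHalf c w)
    (hvw : v ≠ w) : (graph p ω).Adj v w ↔ index v ≠ index w := by
  rcases v with ⟨b, i⟩ | k <;> rcases w with ⟨b', j⟩ | l <;>
    simp only [InHalf, graph, Adj, index, ne_eq, Sum.inl.injEq, Prod.mk.injEq, Fin.val_inj] at * <;>
    grind

theorem index_lt_of_adj_of_not_inHalf {c : Bool} {v w : Vertex p ω} (hv : InHalf c v)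
    (hw : ¬InHalf c w) (h : (graph p ω).Adj v w) : index v < p - 1 := by
  rcases v with ⟨b, i⟩ | k <;> rcases w with ⟨b', j⟩ | l <;>
    simp only [InHalf, graph, Adj, index] at * <;> grind

theorem card_le_of_isClique_of_inHalf {c : Bool} {s : Finset (Vertex p ω)}
    (hs : (graph p ω).IsClique s) (hc : ∀ v ∈ s, InHalf c v) {m : ℕ}
    (hm : ∀ v ∈ s, index v < m) : #s ≤ m := by
  simpa using card_le_card_of_injOn index (t := range m) (fun v hv => mem_range.mpr (hm v hv))
    fun v hv w hw hvw => by_contra fun hne =>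
      (adj_iff_index_ne (hc v hv) (hc w hw) hne).mp (hs hv hw hne) hvw

theorem exists_inHalf_of_isClique {s : Finset (Vertex p ω)} (hs : (graph p ω).IsClique s)
    (hcard : p < #s) : ∃ c, ∀ v ∈ s, InHalf c v := by
  by_contra! h
  obtain ⟨v, hv, hvY⟩ := h true
  obtain ⟨w, hw, hwX⟩ := h false
  obtain ⟨i, rfl⟩ := exists_eq_inl_of_not_inHalf hvY
  obtain ⟨j, rfl⟩ := exists_eq_inl_of_not_inHalf hwX
  simp only [Bool.not_true, Bool.not_false] at hv hw hwX
  have hrest : ∀ u ∈ s.erase (.inl (true, j)), InHalf false u := by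
    rintro (⟨_ | _, k⟩ | k) hu <;> simp only [InHalf, mem_erase] at hu ⊢
    have hvw := hs hv hw (by simp)
    have hvu := hs hv hu.2 (by simp)
    simp only [graph, Adj] at hvw hvu
    grind
  have hle : #(s.erase (.inl (true, j))) ≤ p - 1 :=
    card_le_of_isClique_of_inHalf (hs.subset (erase_subset _ _)) hrest fun u hu =>
      index_lt_of_adj_of_not_inHalf (hrest u hu) hwX
        (hs (mem_of_mem_erase hu) hw (ne_of_mem_erase hu))
  have hpos : 0 < #(s.erase (.inl (true, j))) := card_pos.mpr ⟨_, mem_erase.mpr ⟨by simp, hv⟩⟩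
  rw [card_erase_of_mem hw] at hle hpos
  omega

theorem cliqueFree_succ (hω : p ≤ ω) : (graph p ω).CliqueFree (ω + 1) := by
  intro s hs
  obtain ⟨c, hc⟩ := exists_inHalf_of_isClique hs.isClique (by rw [hs.card_eq]; omega)
  have := card_le_of_isClique_of_inHalf hs.isClique hc fun v _ => index_lt (by omega) v
  rw [hs.card_eq] at this
  omega

def side (b : Bool) : Fin ω ↪ Vertex p ω :=
  ⟨fun i => .inl (b, i), fun i j h => by simpa using h⟩

theorem isNClique_side (b : Bool) : (graph p ω).IsNClique ω (univ.map (side b)) := by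
  refine ⟨?_, by simp⟩
  simp only [IsClique, coe_map, coe_univ, Set.image_univ]
  rintro _ ⟨i, rfl⟩ _ ⟨j, rfl⟩ hij
  show (graph p ω).Adj (.inl (b, i)) (.inl (b, j))
  simpa [graph, Adj] using (side b).injective.ne_iff.mp hij

theorem cliqueNum_eq (hω : p ≤ ω) : (graph p ω).cliqueNum = ω :=
  cliqueNum_eq_of_isNClique_of_cliqueFree (isNClique_side false) (cliqueFree_succ hω)

theorem compl_cliqueFree_three : (graph p ω)ᶜ.CliqueFree 3 := by
  intro s hs
  obtain ⟨u, v, w, huv, huw, hvw, rfl⟩ := card_eq_three.mp hs.card_eq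
  have h1 := hs.isClique (by simp : u ∈ _) (by simp : v ∈ _) huv
  have h2 := hs.isClique (by simp : u ∈ _) (by simp : w ∈ _) huw
  have h3 := hs.isClique (by simp : v ∈ _) (by simp : w ∈ _) hvw
  simp only [compl_adj, graph] at h1 h2 h3
  rcases u with ⟨_ | _, i⟩ | k <;> rcases v with ⟨_ | _, j⟩ | l <;>
    rcases w with ⟨_ | _, m⟩ | n <;> simp only [Adj] at h1 h2 h3 <;> grind

theorem compl_cliqueNum_eq (hω : 2 ≤ ω) : (graph p ω)ᶜ.cliqueNum = 2 := by
  have hadj : (graph p ω)ᶜ.Adj (.inl (false, ⟨0, by omega⟩)) (.inl (true, ⟨1, hω⟩)) := by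
    simp [graph, Adj]
  exact cliqueNum_eq_of_isNClique_of_cliqueFree
    ⟨by rw [coe_pair]; exact isClique_pair.mpr fun _ => hadj, card_pair hadj.ne⟩
    compl_cliqueFree_three

theorem false_of_induced_K1K2Kp (hp : 1 ≤ p) {s q : Finset (Vertex p ω)} {u a b : Vertex p ω}
    (hs : (graph p ω).IsClique s) (hu : u ∉ s) (ha : a ∈ s) (hb : b ∈ s) (hab : a ≠ b)
    (hua : ¬(graph p ω).Adj u a) (hub : ¬(graph p ω).Adj u b)
    (hqs : q ⊆ s) (hqu : ∀ x ∈ q, (graph p ω).Adj u x) (hq : p ≤ #q) : False := by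
  have hlt : p < #s := hq.trans_lt (card_lt_card ⟨hqs, fun h => hua (hqu a (h ha))⟩)
  obtain ⟨c, hc⟩ := exists_inHalf_of_isClique hs hlt
  by_cases huc : InHalf c u
  · have hindex {x} (hx : x ∈ s) (hux : ¬(graph p ω).Adj u x) : index u = index x :=
      not_not.mp (mt (adj_iff_index_ne huc (hc x hx) (ne_of_mem_of_not_mem hx hu).symm).mpr hux)
    exact (adj_iff_index_ne (hc a ha) (hc b hb) hab).mp (hs ha hb hab)
      ((hindex ha hua).symm.trans (hindex hb hub))
  · have := card_le_of_isClique_of_inHalf (hs.subset hqs) (fun x hx => hc x (hqs hx))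
      fun x hx => index_lt_of_adj_of_not_inHalf (hc x (hqs hx)) huc (hqu x hx).symm
    omega

theorem free_K1K2Kp (hp : 1 ≤ p) : _root_.Free (K1K2Kp p) (graph p ω) := by
  rintro ⟨f⟩
  refine false_of_induced_K1K2Kp hp (u := f (.inl (.inl 0))) (a := f (.inl (.inr 0)))
    (b := f (.inl (.inr 1))) (s := (univ.erase (.inl (.inl 0))).map f.toEmbedding)
    (q := (univ.map .inr).map f.toEmbedding)
    (f.isClique_finsetMap (isClique_erase_K1K2Kp p)) ?_ ?_ ?_ ?_ ?_ ?_ ?_ ?_ ?_ <;>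
    simp [subset_iff] <;> simp [K1K2Kp, joinG, K1K2]

theorem card_vertex (hp : 1 ≤ p) : Fintype.card (Vertex p ω) = 2 * ω + p - 1 := by
  simp only [Fintype.card_sum, Fintype.card_prod, Fintype.card_bool, Fintype.card_fin]
  omega

end GStar

theorem stmt_7 (p ω : ℕ) (hp : 1 ≤ p) (hω : p + 1 ≤ ω) :
    ∃ G : SimpleGraph (Fin (2 * ω + p - 1)),
      _root_.Free P3P2 G ∧ _root_.Free (K1K2Kp p) G ∧ G.cliqueNum = ω ∧ Gᶜ.cliqueNum = 2 ∧
      (↑(ω + (p - 1 + 1) / 2) : ℕ∞) ≤ G.chromaticNumber := by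
  let e := (GStar.graph p ω).overFinIso (GStar.card_vertex hp)
  have hα := GStar.compl_cliqueFree_three (p := p) (ω := ω)
  refine ⟨_, (free_P3P2_of_cliqueFree_compl hα).of_embedding e.symm.toEmbedding,
    (GStar.free_K1K2Kp hp).of_embedding e.symm.toEmbedding,
    e.cliqueNum_eq.symm.trans (GStar.cliqueNum_eq (by omega)),
    e.compl.cliqueNum_eq.symm.trans (GStar.compl_cliqueNum_eq (by omega)), ?_⟩
  rw [← chromaticNumber_congr e]
  convert le_chromaticNumber_of_cliqueFree_compl hα using 2
  rw [GStar.card_vertex hp]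
  omega
end

section
/- Let p ≥ 2 and let G be a {P3 ∪ P2, 2K1 + Kp}-free graph with ω(G) ≥ 3p−1. Then G is perfect; in particular χ(G) = ω(G). -/
open SimpleGraph

/-!
Let `Q` be a maximum clique. A vertex outside `Q` with `p` neighbours in `Q` would, together with
a non-neighbour in `Q` (which exists by maximality), span a `2K₁ + Kₚ`; so every vertex outside `Q`
has at most `p - 1` neighbours in `Q`. An induced `P₃` outside `Q` therefore misses at least
`ω - 3(p - 1) ≥ 2` vertices of `Q`, and two of them form an edge completing a `P₃ ∪ P₂`. Hence
`G - Q` is a disjoint union of cliques, and this survives passing to induced subgraphs. Such a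
graph is `ω`-colourable: colour `Q` injectively, then each clique `C` of `G - Q` by Hall's
theorem, the colours still available to a vertex being those not used on its neighbours in `Q`.
-/

open Finset

namespace SimpleGraph

variable {W : Type*} {H : SimpleGraph W}

/-- `H.induce s` has no induced `P₃`, i.e. it is a disjoint union of cliques. -/
def AdjTransOn (H : SimpleGraph W) (s : Set W) : Prop :=
  ∀ ⦃u⦄, u ∈ s → ∀ ⦃v⦄, v ∈ s → ∀ ⦃w⦄, w ∈ s → H.Adj u v → H.Adj v w → u ≠ w → H.Adj u w

namespace AdjTransOn

variable {s : Set W} {u v : W}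

theorem isClique (h : H.AdjTransOn s) (hv : v ∈ s) :
    H.IsClique (insert v (H.neighborSet v) ∩ s) := by
  rintro a ⟨rfl | hva, ha⟩ b ⟨rfl | hvb, hb⟩ hab
  · exact absurd rfl hab
  · exact hvb
  · exact hva.symm
  · exact h ha hv hb hva.symm hvb hab

theorem insert_neighborSet_inter_subset (h : H.AdjTransOn s) (hu : u ∈ s) (hv : v ∈ s)
    (huv : H.Adj u v) : insert u (H.neighborSet u) ∩ s ⊆ insert v (H.neighborSet v) ∩ s := by
  rintro a ⟨rfl | hua, ha⟩
  · exact ⟨Or.inr huv.symm, ha⟩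
  · obtain rfl | hva := eq_or_ne v a
    · exact ⟨Or.inl rfl, ha⟩
    · exact ⟨Or.inr (h hv hu ha huv.symm hua hva), ha⟩

theorem insert_neighborSet_inter_eq (h : H.AdjTransOn s) (hu : u ∈ s) (hv : v ∈ s)
    (huv : H.Adj u v) : insert u (H.neighborSet u) ∩ s = insert v (H.neighborSet v) ∩ s :=
  (h.insert_neighborSet_inter_subset hu hv huv).antisymm
    (h.insert_neighborSet_inter_subset hv hu huv.symm)

theorem induce (h : H.AdjTransOn s) (t : Set W) : (H.induce t).AdjTransOn (Subtype.val ⁻¹' s) :=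
  fun _ hu _ hv _ hw huv hvw huw => h hu hv hw huv hvw (Subtype.val_injective.ne huw)

end AdjTransOn

variable [Fintype W]

theorem IsClique.exists_injOn_avoiding {α : Type*} [Fintype α] {C Q : Set W} {c : W → α}
    (hα : ∀ t : Finset W, H.IsClique (t : Set W) → #t ≤ Fintype.card α)
    (hC : H.IsClique C) (hQ : H.IsClique Q) (hc : Set.InjOn c Q) :
    ∃ f : W → α, Set.InjOn f C ∧ ∀ u ∈ C, ∀ x ∈ Q, H.Adj u x → f u ≠ c x := by
  classical
  let allowed : C → Finset α := fun u => {i | ∀ x ∈ Q, H.Adj u x → i ≠ c x}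
  suffices hall : ∀ s : Finset C, #s ≤ #(s.biUnion allowed) by
    obtain ⟨f, hf, hfa⟩ := (all_card_le_biUnion_card_iff_exists_injective allowed).mp hall
    refine ⟨fun w => if h : w ∈ C then f ⟨w, h⟩ else c w, fun a ha b hb hab => ?_, fun u hu => ?_⟩
    · simpa using congrArg Subtype.val (hf (by simpa [ha, hb] using hab))
    · simpa [hu, allowed] using hfa ⟨u, hu⟩
  intro s
  obtain rfl | ⟨u₀, hu₀⟩ := s.eq_empty_or_nonempty
  · simp
  set S : Finset W := s.map (Function.Embedding.subtype _)
  set N : Finset W := {x | x ∈ Q ∧ ∀ u ∈ S, H.Adj u x}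
  -- Hall's condition: a colour allowed to no vertex of `s` is the colour of a common neighbour
  -- of `s` in `Q`, and these common neighbours extend `S` to a clique.
  have hforb : (s.biUnion allowed)ᶜ ⊆ N.image c := by
    intro i hi
    have key : ∀ u ∈ s, ∃ x ∈ Q, H.Adj u x ∧ c x = i := by
      intro u hu
      by_contra! h
      exact mem_compl.1 hi (mem_biUnion.2 ⟨u, hu, by simpa [allowed, eq_comm] using h⟩)
    obtain ⟨x, hxQ, -, rfl⟩ := key u₀ hu₀
    refine mem_image_of_mem c (mem_filter.2 ⟨mem_univ _, hxQ, ?_⟩)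
    intro u hu
    obtain ⟨u', hu', rfl⟩ := mem_map.1 hu
    obtain ⟨y, hyQ, hy, hyx⟩ := key u' hu'
    rwa [← hc hyQ hxQ hyx]
  have hclique : H.IsClique (↑(S ∪ N) : Set W) := by
    have := H.symm
    rw [coe_union, IsClique, Set.pairwise_union_of_symm]
    refine ⟨hC.subset ?_, hQ.subset ?_, fun u hu x hx _ => (mem_filter.1 hx).2.2 u hu⟩
    · simp [S]
    · simp +contextual [N, Set.subset_def]
  have hdisj : Disjoint S N :=
    Finset.disjoint_left.2 fun u hu hN => H.loopless.irrefl u ((mem_filter.1 hN).2.2 u hu)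
  have h1 := hα _ hclique
  rw [card_union_of_disjoint hdisj, card_map] at h1
  have h2 := (card_le_card hforb).trans card_image_le
  rw [card_compl] at h2
  omega

theorem colorable_cliqueNum_of_adjTransOn_compl {Q : Set W} (hQ : H.IsClique Q)
    (htrans : H.AdjTransOn Qᶜ) : H.Colorable H.cliqueNum := by
  classical
  obtain _ | ⟨⟨w⟩⟩ := isEmpty_or_nonempty W
  · exact .of_isEmpty _
  have hα (t : Finset W) (ht : H.IsClique (t : Set W)) : #t ≤ Fintype.card (Fin H.cliqueNum) := by
    simpa using ht.card_le_cliqueNum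
  have : Nonempty (Fin H.cliqueNum) :=
    Fin.pos_iff_nonempty.1 (by simpa using hα {w} (by simp) : 1 ≤ H.cliqueNum)
  obtain ⟨c, hc⟩ : ∃ c : W → Fin H.cliqueNum, Set.InjOn c Q :=
    Set.exists_injOn_iff_injective.2 <|
      let ⟨e⟩ := Function.Embedding.nonempty_of_card_le (by simpa using hα Q.toFinset (by simpa))
      ⟨e, e.injective⟩
  choose! F hF using fun C (hC : H.IsClique C) => hC.exists_injOn_avoiding hα hQ hc
  let component : W → Set W := fun v => insert v (H.neighborSet v) ∩ Qᶜ
  let col : W → Fin H.cliqueNum := fun v => if v ∈ Q then c v else F (component v) v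
  have hcol {a b : W} (hab : H.Adj a b) (hb : b ∉ Q) : col a ≠ col b := by
    have hbb : b ∈ component b := ⟨Set.mem_insert _ _, hb⟩
    obtain ⟨hinj, havoid⟩ := hF _ (htrans.isClique hb)
    by_cases ha : a ∈ Q
    · simpa [col, ha, hb] using (havoid b hbb a ha hab.symm).symm
    · have hab' : component a = component b := htrans.insert_neighborSet_inter_eq ha hb hab
      simp only [col, ha, hb, hab', if_false]
      exact hab.ne ∘ hinj ⟨Or.inr hab.symm, ha⟩ hbb
  refine ⟨Coloring.mk col fun {a b} hab => ?_⟩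
  by_cases hb : b ∈ Q
  · by_cases ha : a ∈ Q
    · simpa [col, ha, hb] using hab.ne ∘ hc ha hb
    · exact (hcol hab.symm ha).symm
  · exact hcol hab hb

theorem chromaticNumber_eq_cliqueNum_of_adjTransOn_compl {Q : Set W} (hQ : H.IsClique Q)
    (htrans : H.AdjTransOn Qᶜ) : H.chromaticNumber = H.cliqueNum :=
  (colorable_cliqueNum_of_adjTransOn_compl hQ htrans).chromaticNumber_le.antisymm
    H.cliqueNum_le_chromaticNumber

theorem chromaticNumber_induce_eq_cliqueNum_of_adjTransOn_compl {Q : Set W} (hQ : H.IsClique Q)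
    (htrans : H.AdjTransOn Qᶜ) (s : Set W) :
    (H.induce s).chromaticNumber = (H.induce s).cliqueNum := by
  classical
  exact chromaticNumber_eq_cliqueNum_of_adjTransOn_compl
    (fun _ ha _ hb hab => hQ ha hb (Subtype.val_injective.ne hab)) (htrans.induce s)

end SimpleGraph

section

variable {V : Type*} {G : SimpleGraph V}

theorem nonempty_P3P2_embedding {u v w x y : V} (huv : G.Adj u v) (hvw : G.Adj v w)
    (huw : u ≠ w) (huw' : ¬G.Adj u w) (hxy : G.Adj x y)
    (hx : ¬G.Adj u x ∧ ¬G.Adj v x ∧ ¬G.Adj w x) (hy : ¬G.Adj u y ∧ ¬G.Adj v y ∧ ¬G.Adj w y) :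
    Nonempty (P3P2 ↪g G) := by
  refine ⟨⟨⟨Sum.elim ![u, v, w] ![x, y], ?_⟩, fun {a b} => ?_⟩⟩
  · rintro (i | i) (j | j) h <;> fin_cases i <;> fin_cases j <;>
      simp_all [G.adj_comm, huv.ne, hvw.ne, hxy.ne, huv.ne.symm, hvw.ne.symm, hxy.ne.symm]
  · change G.Adj (Sum.elim ![u, v, w] ![x, y] a) (Sum.elim ![u, v, w] ![x, y] b) ↔ _
    rcases a with a | a <;> rcases b with b | b <;> fin_cases a <;> fin_cases b <;>
      simp [P3P2, pathGraph_adj, G.adj_comm, *]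

theorem nonempty_twoK1Kp_embedding {p : ℕ} {x y : V} {K : Finset V} (hxy : x ≠ y)
    (hxy' : ¬G.Adj x y) (hK : G.IsNClique p K) (hx : ∀ z ∈ K, G.Adj x z)
    (hy : ∀ z ∈ K, G.Adj y z) : Nonempty (twoK1Kp p ↪g G) := by
  set e : Fin p ≃ K := (K.equivFinOfCardEq hK.card_eq).symm
  have hadj : ∀ i : Fin 2, ∀ z ∈ K, G.Adj (![x, y] i) z := by
    intro i; fin_cases i <;> assumption
  have hK' : ∀ i j, G.Adj (e i) (e j) ↔ i ≠ j := fun i j =>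
    ⟨fun h hij => h.ne (by rw [hij]), fun hij => hK.isClique (e i).2 (e j).2 (by simpa)⟩
  refine ⟨⟨⟨Sum.elim ![x, y] (fun i => e i), ?_⟩, fun {a b} => ?_⟩⟩
  · rintro (i | i) (j | j) h <;> simp only [Sum.elim_inl, Sum.elim_inr] at h
    · fin_cases i <;> fin_cases j <;> simp_all [eq_comm]
    · exact ((hadj i _ (e j).2).ne h).elim
    · exact ((hadj j _ (e i).2).ne h.symm).elim
    · simpa using h
  · change G.Adj (Sum.elim ![x, y] (fun i => (e i : V)) a)
      (Sum.elim ![x, y] (fun i => (e i : V)) b) ↔ _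
    rcases a with a | a <;> rcases b with b | b
    · fin_cases a <;> fin_cases b <;> simp [twoK1Kp, joinG, hxy', G.adj_comm]
    · simpa [twoK1Kp, joinG] using hadj a _ (e b).2
    · simpa [twoK1Kp, joinG, G.adj_comm] using hadj b _ (e a).2
    · simp +contextual [twoK1Kp, joinG, hK']

theorem card_filter_adj_lt_of_isMaximumClique [Fintype V] [DecidableRel G.Adj] {p : ℕ}
    (hF : _root_.Free (twoK1Kp p) G) {Q : Finset V} (hQ : G.IsMaximumClique Q) {v : V}
    (hv : v ∉ Q) : #{x ∈ Q | G.Adj v x} < p := by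
  classical
  by_contra! hp
  obtain ⟨a, haQ, hva⟩ : ∃ a ∈ Q, ¬G.Adj v a := by
    by_contra! hall
    have := hQ.maximum (insert v Q) (by
      rw [coe_insert]
      exact hQ.isClique.insert fun b hb _ => hall b hb)
    rw [card_insert_of_notMem hv] at this
    omega
  obtain ⟨K, hKsub, hKcard⟩ := exists_subset_card_eq hp
  have hKQ : K ⊆ Q := hKsub.trans (filter_subset _ _)
  have hvK (z : V) (hz : z ∈ K) : G.Adj v z := (mem_filter.1 (hKsub hz)).2
  refine hF (nonempty_twoK1Kp_embedding (x := v) (y := a) (K := K) (fun h => hv (h ▸ haQ)) hva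
    ⟨hQ.isClique.subset (coe_subset.2 hKQ), hKcard⟩ hvK fun z hz => ?_)
  exact hQ.isClique haQ (hKQ hz) fun h => hva (h ▸ hvK z hz)

theorem adjTransOn_compl_of_card_filter_adj_le [DecidableEq V] [DecidableRel G.Adj]
    (hF : _root_.Free P3P2 G) {Q : Finset V} (hQ : G.IsClique (Q : Set V)) {d : ℕ}
    (hdeg : ∀ v ∉ Q, #{x ∈ Q | G.Adj v x} ≤ d) (hQd : 3 * d + 2 ≤ #Q) :
    G.AdjTransOn (Q : Set V)ᶜ := by
  intro u hu v hv w hw huv hvw huw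
  by_contra huw'
  set A := {x ∈ Q | G.Adj u x} ∪ {x ∈ Q | G.Adj v x} ∪ {x ∈ Q | G.Adj w x}
  have hA : #A ≤ 3 * d := calc
    #A ≤ #{x ∈ Q | G.Adj u x} + #{x ∈ Q | G.Adj v x} + #{x ∈ Q | G.Adj w x} :=
      (card_union_le _ _).trans (Nat.add_le_add_right (card_union_le _ _) _)
    _ ≤ d + d + d := by gcongr <;> apply hdeg <;> assumption
    _ = 3 * d := by ring
  have hT : 1 < #(Q \ A) := by
    have := le_card_sdiff A Q
    omega
  obtain ⟨x, hx, y, hy, hxy⟩ := one_lt_card.1 hT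
  simp only [A, mem_sdiff, mem_union, mem_filter, not_or, not_and] at hx hy
  exact hF (nonempty_P3P2_embedding huv hvw huw huw' (hQ hx.1 hy.1 hxy)
    ⟨hx.2.1.1 hx.1, hx.2.1.2 hx.1, hx.2.2 hx.1⟩ ⟨hy.2.1.1 hy.1, hy.2.1.2 hy.1, hy.2.2 hy.1⟩)

end

theorem stmt_10 {V : Type*} [Fintype V] (G : SimpleGraph V) (p : ℕ) (hp : 2 ≤ p)
    (hf1 : _root_.Free P3P2 G) (hf2 : _root_.Free (twoK1Kp p) G)
    (hω : 3 * p - 1 ≤ G.cliqueNum) :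
    (∀ s : Set V, (G.induce s).chromaticNumber = ((G.induce s).cliqueNum : ℕ∞)) ∧
    G.chromaticNumber = (G.cliqueNum : ℕ∞) := by
  classical
  obtain ⟨Q, hQ⟩ := G.maximumClique_exists
  have hQcard : 3 * (p - 1) + 2 ≤ #Q := by
    rw [maximumClique_card_eq_cliqueNum Q hQ]
    omega
  have htrans : G.AdjTransOn (Q : Set V)ᶜ :=
    adjTransOn_compl_of_card_filter_adj_le hf1 hQ.isClique
      (fun v hv => Nat.le_sub_one_of_lt (card_filter_adj_lt_of_isMaximumClique hf2 hQ hv)) hQcard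
  exact ⟨chromaticNumber_induce_eq_cliqueNum_of_adjTransOn_compl hQ.isClique htrans,
    chromaticNumber_eq_cliqueNum_of_adjTransOn_compl hQ.isClique htrans⟩
end

section
/- If G is a (P3 ∪ P2)-free graph with ω(G) = 2 (i.e., triangle-free), then χ(G) ≤ 4. -/
open SimpleGraph

/-! If some vertex `b` has two neighbours `a`, `c`, then `a - b - c` is an induced `P₃`, since
there are no triangles; as `G` is `(P₃ ∪ P₂)`-free, the vertices with no neighbour in `{a, b, c}`
form an independent set. Colour every other vertex by one of its neighbours in `{a, b, c}`: this is
proper because neighbourhoods in a triangle-free graph are independent. Otherwise every vertex has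
degree at most one, so `G` is a forest and hence bipartite. -/

namespace SimpleGraph

variable {V : Type*} {G : SimpleGraph V}

lemma cliqueFree_of_cliqueNum_lt [Finite V] {n : ℕ} (h : G.cliqueNum < n) : G.CliqueFree n :=
  fun s hs => by
    have := hs.isClique.card_le_cliqueNum
    rw [hs.card_eq] at this
    omega

lemma CliqueFree.not_adj_of_adj_of_adj (hG : G.CliqueFree 3) {x y z : V}
    (hxy : G.Adj x y) (hxz : G.Adj x z) : ¬ G.Adj y z := by
  classical
  exact fun hyz => hG {x, y, z} (is3Clique_triple_iff.mpr ⟨hxy, hxz, hyz⟩)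

lemma CliqueFree.colorable_of_isIndepSet_nonNeighbors (hG : G.CliqueFree 3) (s : Finset V)
    (hs : G.IsIndepSet {v | ∀ x ∈ s, ¬ G.Adj x v}) : G.Colorable (s.card + 1) := by
  classical
  let C : G.Coloring (Option s) := Coloring.mk
    (fun v => if h : ∃ x ∈ s, G.Adj x v then some ⟨h.choose, h.choose_spec.1⟩ else none)
    (by
      intro v w hvw hC
      by_cases hv : ∃ x ∈ s, G.Adj x v <;> by_cases hw : ∃ x ∈ s, G.Adj x w <;>
        simp only [hv, hw, dif_pos, dif_neg, not_false_eq_true, Option.some.injEq,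
          Subtype.mk.injEq, reduceCtorEq] at hC
      · exact hG.not_adj_of_adj_of_adj hv.choose_spec.2 (hC ▸ hw.choose_spec.2) hvw
      · push Not at hv hw
        exact hs hv hw hvw.ne hvw)
  simpa using C.colorable

lemma isAcyclic_of_forall_adj_eq (h : ∀ v u w, G.Adj v u → G.Adj v w → u = w) :
    G.IsAcyclic := fun v c hc =>
  hc.snd_ne_penultimate (h v _ _ (c.adj_snd hc.not_nil) (c.adj_penultimate hc.not_nil).symm)

end SimpleGraph

lemma P3P2_eq_or_ends_of_forall_adj_iff :
    ∀ x y : Fin 3 ⊕ Fin 2, (∀ z, P3P2.Adj x z ↔ P3P2.Adj y z) →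
      x = y ∨ x = .inl 0 ∧ y = .inl 2 ∨ x = .inl 2 ∧ y = .inl 0 := by
  simp [P3P2, Sum.forall, Fin.forall_fin_succ, pathGraph_adj]

lemma isIndepSet_nonNeighbors_of_free {V : Type*} {G : SimpleGraph V} [DecidableEq V]
    (hf : _root_.Free P3P2 G) {a b c : V} (hab : G.Adj a b) (hbc : G.Adj b c)
    (hac : ¬ G.Adj a c) (hne : a ≠ c) :
    G.IsIndepSet {v | ∀ x ∈ ({a, b, c} : Finset V), ¬ G.Adj x v} := by
  intro v hv w hw _ hvw
  simp only [Finset.mem_insert, Finset.mem_singleton, forall_eq_or_imp, forall_eq,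
    Set.mem_ofPred_eq] at hv hw
  obtain ⟨hav, hbv, hcv⟩ := hv
  obtain ⟨haw, hbw, hcw⟩ := hw
  let f : Fin 3 ⊕ Fin 2 → V := Sum.elim ![a, b, c] ![v, w]
  have hadj : ∀ x y, G.Adj (f x) (f y) ↔ P3P2.Adj x y := by
    intro x y
    rcases x with x | x <;> rcases y with y | y <;> fin_cases x <;> fin_cases y <;>
      simp [f, P3P2, pathGraph_adj, hab, hbc, hvw, hac, hav, hbv, hcv, haw, hbw, hcw,
        hab.symm, hbc.symm, hvw.symm, G.adj_comm _ a, G.adj_comm _ b, G.adj_comm _ c]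
  have hinj : Function.Injective f := by
    intro x y hxy
    have htwin : ∀ z, P3P2.Adj x z ↔ P3P2.Adj y z := fun z => by rw [← hadj, ← hadj, hxy]
    rcases P3P2_eq_or_ends_of_forall_adj_iff x y htwin with h | ⟨rfl, rfl⟩ | ⟨rfl, rfl⟩
    · exact h
    · exact absurd hxy hne
    · exact absurd hxy.symm hne
  exact hf ⟨⟨⟨f, hinj⟩, hadj _ _⟩⟩

theorem stmt_15 {V : Type*} [Fintype V] (G : SimpleGraph V)
    (hf : _root_.Free P3P2 G) (hω : G.cliqueNum = 2) :
    G.chromaticNumber ≤ (4 : ℕ) := by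
  classical
  have hG : G.CliqueFree 3 := cliqueFree_of_cliqueNum_lt (by omega)
  refine Colorable.chromaticNumber_le (n := 4) ?_
  by_cases hP3 : ∃ b a c, G.Adj b a ∧ G.Adj b c ∧ a ≠ c
  · obtain ⟨b, a, c, hba, hbc, hne⟩ := hP3
    have hind := isIndepSet_nonNeighbors_of_free hf hba.symm hbc
      (hG.not_adj_of_adj_of_adj hba hbc) hne
    exact (hG.colorable_of_isIndepSet_nonNeighbors _ hind).mono
      (Nat.succ_le_succ Finset.card_le_three)
  · push Not at hP3
    exact (isAcyclic_of_forall_adj_eq hP3).colorable_two.mono (by norm_num)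
end

section
/- Let G be a {P3 ∪ P2, 2K1 + Kp}-free graph with p ≥ 2. If the subgraph induced by C_{1,2} (the vertices nonadjacent to both v1 and v2 of a maximum clique) has clique number at least 2p, then χ(G) = ω(G). -/
open SimpleGraph

/-!
Let `ω = |A|`, write `C` for `C_{1,2}` and `R` for the other vertices outside `A`, each adjacent to
`v₁` or `v₂`. An induced `P₃` in `C` together with the edge `v₁v₂` would be an induced `P₃ ∪ P₂`,
so `G[C]` is a disjoint union of cliques, one of which, `D`, has at least `2p` vertices.
Freeness of `2K₁ + Kₚ` says that two vertices complete to a `p`-clique are adjacent, so a vertex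
with a non-neighbour in a clique has fewer than `p` neighbours in it. This forces `R` to be complete
to `D`, hence `D ∪ R` is a clique and `|R| ≤ ω - 2p`.

The vertices of `A` serve as the `ω` colors: each vertex of `A` gets itself, the vertices of `R`
get distinct non-neighbours in `A`, and each clique of `G[C]` is colored by Hall's theorem, every
`b ∈ C` choosing from its palette of non-neighbours in `A` not already used on a neighbour in `R`.
-/

section

open Finset

variable {V : Type*} {G : SimpleGraph V} {p : ℕ}

theorem Finset.exists_injOn_of_card_le_card_biUnion {ι α : Type*} [DecidableEq α] [Nonempty α]
    {E : Finset ι} (t : ι → Finset α) (h : ∀ S ⊆ E, #S ≤ #(S.biUnion t)) :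
    ∃ f : ι → α, Set.InjOn f E ∧ ∀ x ∈ E, f x ∈ t x := by
  classical
  have hall : ∀ S : Finset E, #S ≤ #(S.biUnion fun x => t x) := fun S => by
    simpa [card_image_of_injective _ Subtype.val_injective, image_biUnion] using
      h (S.image Subtype.val) (by simp +contextual [subset_iff])
  obtain ⟨g, hg, hgt⟩ := (all_card_le_biUnion_card_iff_exists_injective _).1 hall
  refine ⟨fun x => if hx : x ∈ E then g ⟨x, hx⟩ else Classical.arbitrary α,
    fun x hx y hy hxy => ?_, fun x hx => ?_⟩
  · rw [mem_coe] at hx hy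
    simp only [dif_pos hx, dif_pos hy] at hxy
    exact congrArg Subtype.val (hg hxy)
  · simpa [dif_pos hx] using hgt ⟨x, hx⟩

theorem SimpleGraph.IsMaximumClique.exists_not_adj [Finite V] {A : Finset V}
    (hA : G.IsMaximumClique A) {u : V} (hu : u ∉ A) : ∃ a ∈ A, ¬G.Adj u a := by
  classical
  by_contra! h
  have hclique : G.IsClique (insert u A : Finset V) := by
    rw [coe_insert]
    exact hA.isClique.insert fun a ha _ => h a ha
  have := hA.maximum _ hclique
  rw [card_insert_of_notMem hu] at this
  omega

theorem adj_of_free_P3P2 (hG : _root_.Free P3P2 G) {a b c d e : V} (hab : G.Adj a b)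
    (hbc : G.Adj b c) (hac : a ≠ c) (hde : G.Adj d e) (had : ¬G.Adj a d) (hae : ¬G.Adj a e)
    (hbd : ¬G.Adj b d) (hbe : ¬G.Adj b e) (hcd : ¬G.Adj c d) (hce : ¬G.Adj c e) :
    G.Adj a c := by
  by_contra hnac
  let f : Fin 3 ⊕ Fin 2 → V := Sum.elim ![a, b, c] ![d, e]
  have hf : ∀ i j, G.Adj (f i) (f j) ↔ P3P2.Adj i j := by
    rintro (i | i) (j | j) <;> fin_cases i <;> fin_cases j <;>
      simp [f, P3P2, SimpleGraph.pathGraph_adj, G.adj_comm, *]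
  have hinj : Function.Injective f := by
    rintro (i | i) (j | j) h <;> fin_cases i <;> fin_cases j <;>
      simp_all [f, G.adj_comm]
  exact hG ⟨⟨⟨f, hinj⟩, hf _ _⟩⟩

theorem adj_of_free_twoK1Kp (hG : _root_.Free (twoK1Kp p) G) {K : Finset V}
    (hK : G.IsClique (K : Set V)) (hp : p ≤ #K) {x y : V} (hxy : x ≠ y)
    (hx : ∀ k ∈ K, G.Adj x k) (hy : ∀ k ∈ K, G.Adj y k) : G.Adj x y := by
  by_contra hnxy
  let e : Fin p ↪ V := (Fin.castLEEmb hp).trans (K.equivFin.symm.toEmbedding.trans (.subtype _))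
  have he : ∀ j, e j ∈ K := fun j => (K.equivFin.symm _).2
  let f : Fin 2 ⊕ Fin p → V := Sum.elim ![x, y] e
  have hf : ∀ i j, G.Adj (f i) (f j) ↔ (twoK1Kp p).Adj i j := by
    rintro (i | i) (j | j) <;> simp only [twoK1Kp, joinG, SimpleGraph.fromRel_adj]
    · fin_cases i <;> fin_cases j <;> simp [f, G.adj_comm, hnxy]
    · fin_cases i <;> simp [f, hx, hy, he]
    · fin_cases j <;> simp [f, G.adj_comm, hx, hy, he]
    · have hij : G.Adj (e i) (e j) ↔ i ≠ j :=
        ⟨fun h hij => h.ne (congrArg e hij), fun hij => hK (he i) (he j) (e.injective.ne hij)⟩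
      simp [f, hij, eq_comm]
  have hinj : Function.Injective f := by
    rintro (i | i) (j | j) h
    · fin_cases i <;> fin_cases j <;> simp_all [f]
    · exact absurd (h ▸ (hf (.inl i) (.inr j)).2 (by simp [twoK1Kp, joinG])) G.irrefl
    · exact absurd (h ▸ (hf (.inl j) (.inr i)).2 (by simp [twoK1Kp, joinG])) G.irrefl
    · simpa [f] using h
  exact hG ⟨⟨⟨f, hinj⟩, hf _ _⟩⟩

theorem card_add_card_le_of_free_twoK1Kp [Finite V] {A : Finset V}
    (hG : _root_.Free (twoK1Kp p) G) (hA : G.IsMaximumClique A) {K X : Finset V}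
    (hK : G.IsClique (K : Set V)) (hp : p ≤ #K) (hKX : Disjoint K X)
    (hX : ∀ x ∈ X, ∀ k ∈ K, G.Adj x k) : #K + #X ≤ #A := by
  classical
  rw [← card_union_of_disjoint hKX]
  refine hA.maximum _ fun x hx y hy hxy => ?_
  simp only [coe_union, Set.mem_union, mem_coe] at hx hy
  rcases hx with hx | hx <;> rcases hy with hy | hy
  · exact hK hx hy hxy
  · exact (hX y hy x hx).symm
  · exact hX x hx y hy
  · exact adj_of_free_twoK1Kp hG hK hp hxy (hX x hx) (hX y hy)

variable [DecidableRel G.Adj]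

theorem card_filter_adj_lt_of_free_twoK1Kp (hG : _root_.Free (twoK1Kp p) G) {K : Finset V}
    (hK : G.IsClique (K : Set V)) {u k : V} (hk : k ∈ K) (huk : u ≠ k) (hnadj : ¬G.Adj u k) :
    #{b ∈ K | G.Adj u b} < p := by
  by_contra! h
  refine hnadj (adj_of_free_twoK1Kp hG (hK.subset (coe_subset.2 (filter_subset _ _))) h huk
    (fun b hb => (mem_filter.1 hb).2) fun b hb => ?_)
  obtain ⟨hbK, hub⟩ := mem_filter.1 hb
  exact hK hk hbK fun hkb => hnadj (hkb ▸ hub)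

theorem forall_adj_of_free_twoK1Kp (hG : _root_.Free (twoK1Kp p) G) {K : Finset V}
    (hK : G.IsClique (K : Set V)) {u : V} (hu : u ∉ K) (h : p ≤ #{b ∈ K | G.Adj u b}) :
    ∀ b ∈ K, G.Adj u b := by
  by_contra! ⟨k, hk, hnadj⟩
  exact (card_filter_adj_lt_of_free_twoK1Kp hG hK hk (ne_of_mem_of_not_mem hk hu).symm
    hnadj).not_ge h

theorem card_filter_adj_lt_of_isMaximumClique_s17 [Finite V] {A : Finset V}
    (hG : _root_.Free (twoK1Kp p) G) (hA : G.IsMaximumClique A) {u : V} (hu : u ∉ A) :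
    #{a ∈ A | G.Adj u a} < p := by
  obtain ⟨a, ha, hua⟩ := hA.exists_not_adj hu
  exact card_filter_adj_lt_of_free_twoK1Kp hG hA.isClique ha (ne_of_mem_of_not_mem ha hu).symm hua

theorem SimpleGraph.IsClique.exists_adj_of_card_filter_adj_lt {K : Finset V}
    (hK : G.IsClique (K : Set V)) {u w : V} (hu : #{b ∈ K | G.Adj u b} < p)
    (hw : #{b ∈ K | G.Adj w b} < p) (hcard : 2 * p ≤ #K) :
    ∃ b₁ ∈ K, ∃ b₂ ∈ K, G.Adj b₁ b₂ ∧
      ¬G.Adj u b₁ ∧ ¬G.Adj w b₁ ∧ ¬G.Adj u b₂ ∧ ¬G.Adj w b₂ := by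
  classical
  have hcover : K ⊆ {b ∈ K | ¬G.Adj u b ∧ ¬G.Adj w b} ∪ {b ∈ K | G.Adj u b} ∪
      {b ∈ K | G.Adj w b} := by
    intro b hb
    simp only [mem_union, mem_filter, hb, true_and]
    tauto
  have : 1 < #{b ∈ K | ¬G.Adj u b ∧ ¬G.Adj w b} := by
    have := (card_le_card hcover).trans
      ((card_union_le _ _).trans (Nat.add_le_add_right (card_union_le _ _) _))
    omega
  obtain ⟨b₁, h₁, b₂, h₂, hne⟩ := one_lt_card.1 this
  rw [mem_filter] at h₁ h₂
  exact ⟨b₁, h₁.1, b₂, h₂.1, hK h₁.1 h₂.1 hne, h₁.2.1, h₁.2.2, h₂.2.1, h₂.2.2⟩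

theorem adj_of_free_P3P2_of_isClique (hG : _root_.Free P3P2 G) {D : Finset V}
    (hD : G.IsClique (D : Set V)) (hcard : 2 * p ≤ #D) {a b c : V} (hab : G.Adj a b)
    (hbc : G.Adj b c) (hac : a ≠ c) (hb : ∀ d ∈ D, ¬G.Adj b d)
    (ha : #{d ∈ D | G.Adj a d} < p) (hc : #{d ∈ D | G.Adj c d} < p) : G.Adj a c := by
  obtain ⟨d, hd, e, he, hde, had, hcd, hae, hce⟩ := hD.exists_adj_of_card_filter_adj_lt ha hc hcard
  exact adj_of_free_P3P2 hG hab hbc hac hde had hae (hb d hd) (hb e he) hcd hce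

theorem forall_adj_of_free_P3P2_of_isClique (hG : _root_.Free P3P2 G)
    (hG' : _root_.Free (twoK1Kp p) G) {D : Finset V} (hD : G.IsClique (D : Set V))
    (hcard : 2 * p ≤ #D) {w w' u : V} (hww' : G.Adj w w') (hw'u : G.Adj w' u) (hwu : w ≠ u)
    (hnwu : ¬G.Adj w u) (hw : ∀ d ∈ D, ¬G.Adj w d) (hw' : ∀ d ∈ D, ¬G.Adj w' d) :
    ∀ b ∈ D, G.Adj u b := by
  by_contra! ⟨b, hb, hub⟩
  have hu := card_filter_adj_lt_of_free_twoK1Kp hG' hD hb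
    (fun h => hw' b hb (h ▸ hw'u)) hub
  have hw0 : #{d ∈ D | G.Adj w d} = 0 := card_eq_zero.2 (filter_false_of_mem hw)
  exact hnwu (adj_of_free_P3P2_of_isClique hG hD hcard hww' hw'u hwu hw' (by omega) hu)

structure CliqueSetup [Fintype V] (G : SimpleGraph V) (p : ℕ) where
  A : Finset V
  v₁ : V
  v₂ : V
  freeP3P2 : _root_.Free P3P2 G
  freeTwoK1Kp : _root_.Free (twoK1Kp p) G
  isMaximumClique : G.IsMaximumClique A
  v₁_mem : v₁ ∈ A
  v₂_mem : v₂ ∈ A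
  adj_v₁_v₂ : G.Adj v₁ v₂

namespace CliqueSetup

variable [Fintype V] [DecidableEq V] (S : CliqueSetup G p)

def C : Finset V := {x | x ∉ S.A ∧ ¬G.Adj x S.v₁ ∧ ¬G.Adj x S.v₂}

def R : Finset V := {x | x ∉ S.A ∧ (G.Adj x S.v₁ ∨ G.Adj x S.v₂)}

-- For `y ∈ C` this is the connected component of `y` in `G[C]`, which is a clique.
def component (y : V) : Finset V := {z ∈ S.C | z = y ∨ G.Adj z y}

def palette (f : V → V) (b : V) : Finset V :=
  {a ∈ S.A | ¬G.Adj b a} \ {r ∈ S.R | G.Adj b r}.image f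

def color (f g : V → V) (v : V) : V := if v ∈ S.A then v else if v ∈ S.C then g v else f v

variable {S}

theorem mem_C {x : V} : x ∈ S.C ↔ x ∉ S.A ∧ ¬G.Adj x S.v₁ ∧ ¬G.Adj x S.v₂ := by
  simp [C]

theorem mem_R {x : V} : x ∈ S.R ↔ x ∉ S.A ∧ (G.Adj x S.v₁ ∨ G.Adj x S.v₂) := by
  simp [R]

theorem mem_component {y z : V} : z ∈ S.component y ↔ z ∈ S.C ∧ (z = y ∨ G.Adj z y) := by
  simp [component]

theorem mem_palette {f : V → V} {a b : V} :
    a ∈ S.palette f b ↔ a ∈ S.A ∧ ¬G.Adj b a ∧ ∀ r ∈ S.R, G.Adj b r → f r ≠ a := by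
  simp [palette, and_assoc]

theorem mem_A_or_mem_C_or_mem_R (x : V) : x ∈ S.A ∨ x ∈ S.C ∨ x ∈ S.R := by
  simp only [mem_C, mem_R]
  tauto

theorem notMem_A_of_mem_C {x : V} (hx : x ∈ S.C) : x ∉ S.A := (mem_C.1 hx).1

theorem notMem_A_of_mem_R {x : V} (hx : x ∈ S.R) : x ∉ S.A := (mem_R.1 hx).1

theorem notMem_C_of_mem_R {x : V} (hx : x ∈ S.R) : x ∉ S.C := fun hC =>
  (mem_R.1 hx).2.elim (mem_C.1 hC).2.1 (mem_C.1 hC).2.2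

theorem not_adj_of_mem_C {x : V} (hx : x ∈ S.C) : ¬G.Adj S.v₁ x ∧ ¬G.Adj S.v₂ x :=
  ⟨fun h => (mem_C.1 hx).2.1 h.symm, fun h => (mem_C.1 hx).2.2 h.symm⟩

theorem component_subset_C (y : V) : S.component y ⊆ S.C := filter_subset _ _

theorem mem_component_self {y : V} (hy : y ∈ S.C) : y ∈ S.component y :=
  mem_component.2 ⟨hy, Or.inl rfl⟩

theorem adj_of_mem_C {x y z : V} (hx : x ∈ S.C) (hy : y ∈ S.C) (hz : z ∈ S.C) (hxy : G.Adj x y)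
    (hyz : G.Adj y z) (hxz : x ≠ z) : G.Adj x z := by
  rw [mem_C] at hx hy hz
  exact adj_of_free_P3P2 S.freeP3P2 hxy hyz hxz S.adj_v₁_v₂ hx.2.1 hx.2.2 hy.2.1 hy.2.2 hz.2.1
    hz.2.2

theorem isClique_component {y : V} (hy : y ∈ S.C) : G.IsClique (S.component y : Set V) := by
  intro z hz w hw hzw
  obtain ⟨hzC, rfl | hzy⟩ := mem_component.1 hz <;> obtain ⟨hwC, rfl | hwy⟩ := mem_component.1 hw
  · exact absurd rfl hzw
  · exact hwy.symm
  · exact hzy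
  · exact adj_of_mem_C hzC hy hwC hzy hwy.symm hzw

theorem component_subset_of_mem {y z : V} (hy : y ∈ S.C) (hz : z ∈ S.component y) :
    S.component z ⊆ S.component y := by
  obtain ⟨hzC, hzy⟩ := mem_component.1 hz
  intro w hw
  obtain ⟨hwC, hwz⟩ := mem_component.1 hw
  refine mem_component.2 ⟨hwC, or_iff_not_imp_left.2 fun hwy => ?_⟩
  rcases hwz with rfl | hwz <;> rcases hzy with rfl | hzy
  · exact absurd rfl hwy
  · exact hzy
  · exact hwz
  · exact adj_of_mem_C hwC hzC hy hwz hzy hwy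

theorem component_eq_of_mem {y z : V} (hy : y ∈ S.C) (hz : z ∈ S.component y) :
    S.component z = S.component y := by
  obtain ⟨hzC, hzy⟩ := mem_component.1 hz
  exact (component_subset_of_mem hy hz).antisymm
    (component_subset_of_mem hzC (mem_component.2 ⟨hy, hzy.imp Eq.symm fun h => h.symm⟩))

theorem not_adj_of_component_ne {y z e b : V} (hy : y ∈ S.C) (hz : z ∈ S.C)
    (hyz : S.component y ≠ S.component z) (he : e ∈ S.component y) (hb : b ∈ S.component z) :
    ¬G.Adj e b := fun heb => by
  have hbC := S.component_subset_C z hb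
  have heb' : e ∈ S.component b := mem_component.2 ⟨S.component_subset_C y he, Or.inr heb⟩
  exact hyz <| by
    rw [← component_eq_of_mem hy he, component_eq_of_mem hbC heb', component_eq_of_mem hz hb]

theorem exists_two_mul_le_card_component (hp : 0 < p)
    (hC : 2 * p ≤ (G.induce (S.C : Set V)).cliqueNum) :
    ∃ x₀ ∈ S.C, 2 * p ≤ #(S.component x₀) := by
  obtain ⟨t, ht⟩ := (G.induce (S.C : Set V)).exists_isNClique_cliqueNum
  rw [isNClique_induce_iff] at ht
  set X := t.map (.subtype _)
  have hXC : X ⊆ S.C := by simp +contextual [X, subset_iff]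
  obtain ⟨x₀, hx₀⟩ : X.Nonempty := card_pos.1 (by rw [ht.card_eq]; omega)
  refine ⟨x₀, hXC hx₀, hC.trans (ht.card_eq ▸ card_le_card fun x hx => ?_)⟩
  exact mem_component.2 ⟨hXC hx, (eq_or_ne x x₀).imp_right (ht.isClique hx hx₀)⟩

section Coloring

variable {f g : V → V}

theorem color_of_mem_A {v : V} (hv : v ∈ S.A) : S.color f g v = v := if_pos hv

theorem color_of_mem_C {v : V} (hv : v ∈ S.C) : S.color f g v = g v := by
  simp [color, notMem_A_of_mem_C hv, hv]

theorem color_of_mem_R {v : V} (hv : v ∈ S.R) : S.color f g v = f v := by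
  simp [color, notMem_A_of_mem_R hv, notMem_C_of_mem_R hv]

variable (hfA : ∀ r ∈ S.R, f r ∈ {a ∈ S.A | ¬G.Adj r a}) (hgC : ∀ v ∈ S.C, g v ∈ S.palette f v)
include hfA hgC

theorem color_mem_filter {v : V} (hv : v ∉ S.A) :
    S.color f g v ∈ {a ∈ S.A | ¬G.Adj v a} := by
  rcases S.mem_A_or_mem_C_or_mem_R v with h | h | h
  · exact absurd h hv
  · obtain ⟨hA, hadj, -⟩ := mem_palette.1 (hgC v h)
    rw [color_of_mem_C h]
    exact mem_filter.2 ⟨hA, hadj⟩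
  · rw [color_of_mem_R h]
    exact hfA v h

theorem color_ne_color_of_adj (hf : Set.InjOn f S.R)
    (hg : ∀ v ∈ S.C, ∀ w ∈ S.C, G.Adj v w → g v ≠ g w) {v w : V} (hvw : G.Adj v w) :
    S.color f g v ≠ S.color f g w := by
  have hA : ∀ {x y}, G.Adj x y → x ∉ S.A → y ∈ S.A → S.color f g x ≠ S.color f g y :=
    fun hxy hx hy h =>
      (mem_filter.1 (color_mem_filter hfA hgC hx)).2 (by rwa [h, color_of_mem_A hy])
  have hCR : ∀ {x y}, G.Adj x y → x ∈ S.C → y ∈ S.R → S.color f g x ≠ S.color f g y :=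
    fun {x y} hxy hx hy h => (mem_palette.1 (hgC x hx)).2.2 y hy hxy
      (by rw [← color_of_mem_C (g := g) hx, ← color_of_mem_R (f := f) hy, h])
  rcases S.mem_A_or_mem_C_or_mem_R v with hv | hv | hv <;>
    rcases S.mem_A_or_mem_C_or_mem_R w with hw | hw | hw
  · rw [color_of_mem_A hv, color_of_mem_A hw]
    exact hvw.ne
  · exact (hA hvw.symm (notMem_A_of_mem_C hw) hv).symm
  · exact (hA hvw.symm (notMem_A_of_mem_R hw) hv).symm
  · exact hA hvw (notMem_A_of_mem_C hv) hw
  · rw [color_of_mem_C hv, color_of_mem_C hw]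
    exact hg v hv w hw hvw
  · exact hCR hvw hv hw
  · exact hA hvw (notMem_A_of_mem_R hv) hw
  · exact (hCR hvw.symm hw hv).symm
  · rw [color_of_mem_R hv, color_of_mem_R hw]
    exact hf.ne (mem_coe.2 hv) (mem_coe.2 hw) hvw.ne

end Coloring

section BigComponent

variable {x₀ : V} (hx₀ : x₀ ∈ S.C) (hD : 2 * p ≤ #(S.component x₀))
include hx₀ hD

theorem forall_adj_component_of_adj {v u : V} (hv : v ∈ S.A)
    (hvD : ∀ d ∈ S.component x₀, ¬G.Adj v d) (hu : u ∉ S.A) (huv : G.Adj u v) :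
    ∀ b ∈ S.component x₀, G.Adj u b := by
  have hDc := isClique_component hx₀
  have hfree := S.freeTwoK1Kp
  by_contra! ⟨b, hb, hub⟩
  have hbA := notMem_A_of_mem_C (S.component_subset_C x₀ hb)
  have huD := card_filter_adj_lt_of_free_twoK1Kp hfree hDc hb (fun h => hvD b hb (h ▸ huv).symm) hub
  -- every non-neighbour `a` of `u` in `A` is complete to the component, else `a - v - u` is an
  -- induced `P₃` beside an edge of the component
  have hZ : {a ∈ S.A | ¬G.Adj u a} ⊆ {a ∈ S.A | G.Adj b a} := by
    intro a ha
    rw [mem_filter] at ha ⊢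
    refine ⟨ha.1, by_contra fun hba => ha.2 ?_⟩
    have hav : a ≠ v := fun h => ha.2 (h ▸ huv)
    have haD := card_filter_adj_lt_of_free_twoK1Kp hfree hDc hb (ne_of_mem_of_not_mem ha.1 hbA)
      fun h => hba h.symm
    exact (adj_of_free_P3P2_of_isClique S.freeP3P2 hDc hD
      (S.isMaximumClique.isClique (mem_coe.2 ha.1) (mem_coe.2 hv) hav) huv.symm
      (ne_of_mem_of_not_mem ha.1 hu) hvD haD huD).symm
  have h₁ := card_filter_adj_lt_of_isMaximumClique_s17 hfree S.isMaximumClique hbA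
  have h₂ := card_filter_adj_lt_of_isMaximumClique_s17 hfree S.isMaximumClique hu
  have h₃ := card_filter_add_card_filter_not (s := S.A) (G.Adj u ·)
  have h₄ := S.isMaximumClique.maximum _ hDc
  have h₅ := card_le_card hZ
  omega

theorem forall_adj_component_of_mem_R {u : V} (hu : u ∈ S.R) :
    ∀ b ∈ S.component x₀, G.Adj u b := by
  obtain ⟨huA, h | h⟩ := mem_R.1 hu
  · exact forall_adj_component_of_adj hx₀ hD S.v₁_mem
      (fun d hd => (not_adj_of_mem_C (S.component_subset_C x₀ hd)).1) huA h
  · exact forall_adj_component_of_adj hx₀ hD S.v₂_mem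
      (fun d hd => (not_adj_of_mem_C (S.component_subset_C x₀ hd)).2) huA h

theorem card_component_add_card_R_le : #(S.component x₀) + #S.R ≤ #S.A :=
  card_add_card_le_of_free_twoK1Kp S.freeTwoK1Kp S.isMaximumClique (isClique_component hx₀)
    (by omega) (disjoint_left.2 fun _ hd hR => notMem_C_of_mem_R hR (S.component_subset_C x₀ hd))
    fun _ hr => forall_adj_component_of_mem_R hx₀ hD hr

theorem exists_injOn_R :
    ∃ f : V → V, Set.InjOn f S.R ∧ ∀ r ∈ S.R, f r ∈ {a ∈ S.A | ¬G.Adj r a} := by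
  have : Nonempty V := ⟨S.v₁⟩
  refine exists_injOn_of_card_le_card_biUnion _ fun T hT => ?_
  obtain rfl | ⟨r, hr⟩ := T.eq_empty_or_nonempty
  · simp
  have h₁ := card_filter_adj_lt_of_isMaximumClique_s17 S.freeTwoK1Kp S.isMaximumClique
    (notMem_A_of_mem_R (hT hr))
  have h₂ := card_filter_add_card_filter_not (s := S.A) (G.Adj r ·)
  have h₃ := card_component_add_card_R_le hx₀ hD
  have h₄ := card_le_card hT
  have h₅ := card_le_card (subset_biUnion_of_mem (fun r => {a ∈ S.A | ¬G.Adj r a}) hr)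
  omega

theorem lt_card_palette (f : V → V) {b : V} (hb : b ∉ S.A) : p < #(S.palette f b) := by
  have h₁ := card_filter_adj_lt_of_isMaximumClique_s17 S.freeTwoK1Kp S.isMaximumClique hb
  have h₂ := card_filter_add_card_filter_not (s := S.A) (G.Adj b ·)
  have h₃ := card_component_add_card_R_le hx₀ hD
  have h₄ := le_card_sdiff ({r ∈ S.R | G.Adj b r}.image f) {a ∈ S.A | ¬G.Adj b a}
  have h₅ := card_image_le (s := {r ∈ S.R | G.Adj b r}) (f := f)
  have h₆ := card_filter_le S.R (G.Adj b ·)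
  unfold palette
  omega

theorem forall_adj_component_of_exists_adj {y : V} (hy : y ∈ S.C)
    (hyx₀ : S.component y ≠ S.component x₀) {a : V} (ha : a ∈ S.A)
    (haD : ¬∀ b ∈ S.component x₀, G.Adj a b) {e : V} (he : e ∈ S.component y) (hae : G.Adj a e) :
    ∀ b ∈ S.component y, G.Adj a b := by
  intro e' he'
  by_contra hae'
  have hanti : ∀ z ∈ S.component y, ∀ d ∈ S.component x₀, ¬G.Adj z d :=
    fun z hz d hd => not_adj_of_component_ne hy hx₀ hyx₀ hz hd
  have hee' : G.Adj e' e := isClique_component hy he' he fun h => hae' (h ▸ hae)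
  exact haD <| forall_adj_of_free_P3P2_of_isClique S.freeP3P2 S.freeTwoK1Kp
    (isClique_component hx₀) hD hee' hae.symm
    (ne_of_mem_of_not_mem ha (notMem_A_of_mem_C (S.component_subset_C y he'))).symm
    (fun h => hae' h.symm) (hanti e' he') (hanti e he)

section

variable {f : V → V} (hf : Set.InjOn f S.R) (hfA : ∀ r ∈ S.R, f r ∈ {a ∈ S.A | ¬G.Adj r a})
include hf hfA

theorem sdiff_subset_biUnion_palette {y : V} (hy : y ∈ S.C) {T : Finset V}
    (hT : T ⊆ S.component y) (hp : p ≤ #T) :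
    S.A \ ({a ∈ S.A | ∀ b ∈ S.component y, G.Adj a b} ∪
      {r ∈ S.R | ∀ b ∈ S.component y, G.Adj r b}.image f) ⊆ T.biUnion (S.palette f) := by
  have hcomplete : ∀ v ∉ S.component y, (∀ b ∈ T, G.Adj v b) → ∀ b ∈ S.component y, G.Adj v b :=
    fun v hv h => forall_adj_of_free_twoK1Kp S.freeTwoK1Kp (isClique_component hy) hv
      (hp.trans (card_le_card fun b hb => mem_filter.2 ⟨hT hb, h b hb⟩))
  intro a ha
  rw [mem_sdiff, mem_union, not_or] at ha
  obtain ⟨haA, haE, haRE⟩ := ha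
  by_contra hno
  have hcov : ∀ b ∈ T, G.Adj b a ∨ ∃ r ∈ S.R, G.Adj b r ∧ f r = a := by
    intro b hb
    by_contra! h
    exact hno (mem_biUnion.2 ⟨b, hb, mem_palette.2 ⟨haA, h.1, fun r hr hbr => h.2 r hr hbr⟩⟩)
  have haC : a ∉ S.component y := fun h => notMem_A_of_mem_C (S.component_subset_C y h) haA
  by_cases himg : ∃ r ∈ S.R, f r = a
  · obtain ⟨r, hr, rfl⟩ := himg
    have hrE : ¬∀ b ∈ S.component y, G.Adj r b := fun h =>
      haRE (mem_image_of_mem f (mem_filter.2 ⟨hr, h⟩))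
    have hrD := forall_adj_component_of_mem_R hx₀ hD hr
    have hfrD : ¬∀ b ∈ S.component x₀, G.Adj (f r) b := fun h =>
      (mem_filter.1 (hfA r hr)).2 (adj_of_free_twoK1Kp S.freeTwoK1Kp (isClique_component hx₀)
        (by omega) (ne_of_mem_of_not_mem haA (notMem_A_of_mem_R hr)).symm hrD h)
    by_cases hnbr : ∃ e ∈ S.component y, G.Adj (f r) e
    · obtain ⟨e, he, hfe⟩ := hnbr
      exact haE (mem_filter.2 ⟨haA, forall_adj_component_of_exists_adj hx₀ hD hy
        (fun h => hrE (h ▸ hrD)) haA hfrD he hfe⟩)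
    · push Not at hnbr
      refine hrE (hcomplete r (fun h => notMem_C_of_mem_R hr (S.component_subset_C y h))
        fun b hb => ?_)
      obtain hba | ⟨r', hr', hbr', hfr'⟩ := hcov b hb
      · exact absurd hba.symm (hnbr b (hT hb))
      · exact hf hr' hr hfr' ▸ hbr'.symm
  · push Not at himg
    exact haE (mem_filter.2 ⟨haA, hcomplete a haC fun b hb =>
      ((hcov b hb).resolve_right fun ⟨r, hr, _, hfr⟩ => himg r hr hfr).symm⟩)

theorem card_le_card_biUnion_palette {y : V} (hy : y ∈ S.C) {T : Finset V}
    (hT : T ⊆ S.component y) : #T ≤ #(T.biUnion (S.palette f)) := by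
  -- A small `T` is served by a single palette. A large one forms a clique together with the
  -- vertices of `A` and `R` complete to the component, and every other vertex of `A` lies in
  -- some palette of `T`.
  by_cases hp : p ≤ #T
  · set AE := {a ∈ S.A | ∀ b ∈ S.component y, G.Adj a b}
    set RE := {r ∈ S.R | ∀ b ∈ S.component y, G.Adj r b}
    have hbound : #T + #(AE ∪ RE) ≤ #S.A := by
      refine card_add_card_le_of_free_twoK1Kp S.freeTwoK1Kp S.isMaximumClique
        ((isClique_component hy).subset (coe_subset.2 hT)) hp (disjoint_left.2 fun x hxT hx => ?_)
        fun x hx b hb => ?_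
      · have hxC := S.component_subset_C y (hT hxT)
        rcases mem_union.1 hx with hx | hx
        · exact notMem_A_of_mem_C hxC (mem_filter.1 hx).1
        · exact notMem_C_of_mem_R (mem_filter.1 hx).1 hxC
      · rcases mem_union.1 hx with hx | hx <;> exact (mem_filter.1 hx).2 b (hT hb)
    have hdisj : Disjoint AE RE :=
      disjoint_left.2 fun x hx hx' => notMem_A_of_mem_R (mem_filter.1 hx').1 (mem_filter.1 hx).1
    have h₁ : #(S.A \ (AE ∪ RE.image f)) ≤ _ :=
      card_le_card (sdiff_subset_biUnion_palette hx₀ hD hf hfA hy hT hp)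
    have h₂ := le_card_sdiff (AE ∪ RE.image f) S.A
    have h₃ := card_union_le AE (RE.image f)
    have h₄ := card_image_le (s := RE) (f := f)
    rw [card_union_of_disjoint hdisj] at hbound
    omega
  · obtain rfl | ⟨b, hb⟩ := T.eq_empty_or_nonempty
    · simp
    · have h₁ := lt_card_palette hx₀ hD f (notMem_A_of_mem_C (S.component_subset_C y (hT hb)))
      have h₂ := card_le_card (subset_biUnion_of_mem (S.palette f) hb)
      omega

theorem exists_coloring_C : ∃ g : V → V, (∀ v ∈ S.C, g v ∈ S.palette f v) ∧
    ∀ v ∈ S.C, ∀ w ∈ S.C, G.Adj v w → g v ≠ g w := by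
  have : Nonempty V := ⟨S.v₁⟩
  have hHall : ∀ E ∈ S.C.image S.component,
      ∃ g : V → V, Set.InjOn g E ∧ ∀ b ∈ E, g b ∈ S.palette f b := by
    simp only [mem_image]
    rintro _ ⟨y, hy, rfl⟩
    exact exists_injOn_of_card_le_card_biUnion _ fun T hT =>
      card_le_card_biUnion_palette hx₀ hD hf hfA hy hT
  choose! g hg using hHall
  refine ⟨fun v => g (S.component v) v,
    fun v hv => (hg _ (mem_image_of_mem _ hv)).2 v (mem_component_self hv),
    fun v hv w hw hvw h => hvw.ne ?_⟩
  have hwv : w ∈ S.component v := mem_component.2 ⟨hw, Or.inr hvw.symm⟩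
  beta_reduce at h
  rw [component_eq_of_mem hv hwv] at h
  exact (hg _ (mem_image_of_mem _ hv)).1 (mem_coe.2 (mem_component_self hv)) (mem_coe.2 hwv) h

end

theorem colorable : G.Colorable #S.A := by
  obtain ⟨f, hf, hfA⟩ := exists_injOn_R hx₀ hD
  obtain ⟨g, hgC, hg⟩ := exists_coloring_C hx₀ hD hf hfA
  have hmem : ∀ v, S.color f g v ∈ S.A := fun v => by
    by_cases hv : v ∈ S.A
    · rwa [color_of_mem_A hv]
    · exact (mem_filter.1 (color_mem_filter hfA hgC hv)).1
  simpa using (Coloring.mk (fun v => (⟨S.color f g v, hmem v⟩ : S.A)) fun hvw h =>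
    color_ne_color_of_adj hfA hgC hf hg hvw (congrArg Subtype.val h)).colorable

end BigComponent

end CliqueSetup

end

theorem stmt_17 {V : Type*} [Fintype V] (G : SimpleGraph V) (p : ℕ) (hp : 2 ≤ p)
    (hf1 : _root_.Free P3P2 G) (hf2 : _root_.Free (twoK1Kp p) G)
    (A : Set V) (hA : G.IsClique A) (hAmax : A.ncard = G.cliqueNum)
    (v1 v2 : V) (hv1 : v1 ∈ A) (hv2 : v2 ∈ A) (hne : v1 ≠ v2)
    (hC : 2 * p ≤ (G.induce {x | x ∉ A ∧ ¬ G.Adj x v1 ∧ ¬ G.Adj x v2}).cliqueNum) :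
    G.chromaticNumber = (G.cliqueNum : ℕ∞) := by
  classical
  have hmax : G.IsMaximumClique A.toFinset := ⟨by simpa using hA, fun t ht => by
    rw [← Set.ncard_eq_toFinset_card', hAmax]
    exact ht.card_le_cliqueNum⟩
  let S : CliqueSetup G p :=
    ⟨A.toFinset, v1, v2, hf1, hf2, hmax, by simpa, by simpa, hA hv1 hv2 hne⟩
  have hCS : {x | x ∉ A ∧ ¬G.Adj x v1 ∧ ¬G.Adj x v2} = (S.C : Set V) := by
    ext
    simp [S, CliqueSetup.C]
  obtain ⟨x₀, hx₀, hD⟩ := S.exists_two_mul_le_card_component (by omega) (hCS ▸ hC)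
  rw [← maximumClique_card_eq_cliqueNum _ hmax]
  exact le_antisymm (S.colorable hx₀ hD).chromaticNumber_le hmax.isClique.card_le_chromaticNumber
end

section
/- Let G be a {P3 ∪ P2, (K1 ∪ K2) + Kp}-free graph with ω(G) ≥ p+2, p ≥ 1, with maximum clique A = {v1,...,vω} and Wagon partition sets C_{i,j}. If for some pair (i,j) with j ≤ p+1 the clique number of the subgraph induced on C_{i,j} is at least p−j+4, then for every k ≠ i with 1 ≤ k ≤ j−1 the set C_{k,j} is an independent set (its induced subgraph has clique number at most 1). -/
open SimpleGraph

/-!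
Suppose `x y ∈ C_{k,j}` are adjacent and let `S ⊆ C_{i,j}` be the large clique. The vertices
`N = {v_m | m < j, m ≠ i, k}` of `A` are complete to `S`, to `v_k` and to `C_{k,j}`, so `S ∪ N` is a
clique on at least `p + 1` vertices, complete to `v_k`.

A vertex `z ∈ C_{k,j}` misses at most one vertex of `S`: two missed vertices would span an edge
that, together with the path `z v_i v_j`, induces `P₃ ∪ P₂`. If `z` missed some `s ∈ S`, then `z`,
the edge `s v_k` and the `p`-clique `(S \ {s}) ∪ N` would induce `(K₁ ∪ K₂) + K_p`. Hence `x` and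
`y` are complete to `S`, and `v_k`, the edge `x y` and `S ∪ N` induce `(K₁ ∪ K₂) + K_p`.
-/

section

variable {V : Type*} {G : SimpleGraph V}

lemma not_free_P3P2 {a b c d e : V} (hab : G.Adj a b) (hbc : G.Adj b c) (hac : ¬ G.Adj a c)
    (hac' : a ≠ c) (hde : G.Adj d e) (had : ¬ G.Adj a d) (hae : ¬ G.Adj a e)
    (hbd : ¬ G.Adj b d) (hbe : ¬ G.Adj b e) (hcd : ¬ G.Adj c d) (hce : ¬ G.Adj c e) :
    ¬ _root_.Free P3P2 G := by
  have : a ≠ d := by rintro rfl; exact hae hde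
  have : a ≠ e := by rintro rfl; exact had hde.symm
  have : b ≠ d := by rintro rfl; exact hbe hde
  have : b ≠ e := by rintro rfl; exact hbd hde.symm
  have : c ≠ d := by rintro rfl; exact hce hde
  have : c ≠ e := by rintro rfl; exact hcd hde.symm
  let f : Fin 3 ⊕ Fin 2 → V := Sum.elim ![a, b, c] ![d, e]
  have hf : f.Injective := by
    rintro (x | x) (y | y) h <;> fin_cases x <;> fin_cases y <;>
      simp_all [f, eq_comm, hab.ne, hbc.ne, hde.ne]
  refine fun hfree => hfree ⟨⟨⟨f, hf⟩, fun {x y} => ?_⟩⟩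
  rcases x with x | x <;> rcases y with y | y <;> fin_cases x <;> fin_cases y <;>
    simp [f, P3P2, pathGraph_adj, hab, hbc, hde, hac, had, hae, hbd, hbe, hcd, hce, G.adj_comm]

lemma not_free_K1K2Kp {p : ℕ} {a b c : V} {T : Finset V} (hab : ¬ G.Adj a b)
    (hac : ¬ G.Adj a c) (hbc : G.Adj b c) (hT : G.IsClique (T : Set V)) (hTcard : p ≤ T.card)
    (haT : ∀ t ∈ T, G.Adj a t) (hbT : ∀ t ∈ T, G.Adj b t) (hcT : ∀ t ∈ T, G.Adj c t) :
    ¬ _root_.Free (K1K2Kp p) G := by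
  obtain ⟨T', hT'T, hT'card⟩ := Finset.exists_subset_card_eq hTcard
  let w : Fin p → V := fun t => (T'.equivFinOfCardEq hT'card).symm t
  have hwT (t : Fin p) : w t ∈ T := hT'T ((T'.equivFinOfCardEq hT'card).symm t).2
  have hw : w.Injective := fun t t' h =>
    (T'.equivFinOfCardEq hT'card).symm.injective (Subtype.ext h)
  have hww (t t' : Fin p) : G.Adj (w t) (w t') ↔ t ≠ t' :=
    ⟨fun h e => G.irrefl (e ▸ h), fun h => hT (hwT t) (hwT t') (hw.ne h)⟩
  have hab' : a ≠ b := by rintro rfl; exact hac hbc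
  have hac' : a ≠ c := by rintro rfl; exact hab hbc.symm
  let f : (Fin 1 ⊕ Fin 2) ⊕ Fin p → V := Sum.elim (Sum.elim (fun _ => a) ![b, c]) w
  have hf : f.Injective := by
    rintro ((x | x) | x) ((y | y) | y) h <;> (try fin_cases x) <;> (try fin_cases y)
    all_goals simp_all [f, eq_comm, hbc.ne, (haT _ (hwT _)).ne, (hbT _ (hwT _)).ne,
      (hcT _ (hwT _)).ne, hw.eq_iff]
  refine fun hfree => hfree ⟨⟨⟨f, hf⟩, fun {x y} => ?_⟩⟩
  rcases x with (x | x) | x <;> rcases y with (y | y) | y <;>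
    (try fin_cases x) <;> (try fin_cases y)
  all_goals simp [f, K1K2Kp, K1K2, joinG, hab, hac, hbc, hww, haT _ (hwT _), hbT _ (hwT _),
    hcT _ (hwT _), G.adj_comm, eq_comm]

lemma subsingleton_nonadj_of_free_P3P2 (hf : _root_.Free P3P2 G) {u w z : V} (huw : G.Adj u w)
    (hzu : G.Adj z u) (hzw : ¬ G.Adj z w) (hzw' : z ≠ w) {S : Set V} (hS : G.IsClique S)
    (hSu : ∀ s ∈ S, ¬ G.Adj u s) (hSw : ∀ s ∈ S, ¬ G.Adj w s) :
    {s ∈ S | ¬ G.Adj z s}.Subsingleton := by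
  rintro s ⟨hs, hzs⟩ s' ⟨hs', hzs'⟩
  by_contra hne
  exact not_free_P3P2 hzu huw hzw hzw' (hS hs hs' hne) hzs hzs' (hSu s hs) (hSu s' hs')
    (hSw s hs) (hSw s' hs') hf

variable {n : ℕ} {v : Fin n → V}

/-- The set `C_{i,j}` of the Wagon partition with respect to the clique `v`. -/
def wagonSet (G : SimpleGraph V) (v : Fin n → V) (i j : Fin n) : Set V :=
  {x | x ∉ Set.range v ∧ ¬ G.Adj x (v i) ∧ ¬ G.Adj x (v j) ∧ ∀ k, k < j → k ≠ i → G.Adj x (v k)}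

variable [DecidableEq V]

def wagonCore (v : Fin n → V) (i k j : Fin n) : Finset V := (Finset.Iio j \ {i, k}).image v

lemma wagonCore_comm (i k j : Fin n) : wagonCore v i k j = wagonCore v k i j := by
  rw [wagonCore, wagonCore, Finset.pair_comm]

lemma card_wagonCore (hinj : v.Injective) {i k j : Fin n} (hij : i < j)
    (hkj : k < j) (hki : k ≠ i) : (wagonCore v i k j).card = j - 2 := by
  rw [wagonCore, Finset.card_image_of_injective _ hinj,
    Finset.card_sdiff_of_subset (by simp [Finset.insert_subset_iff, hij, hkj]),
    Fin.card_Iio, Finset.card_pair hki.symm]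

lemma adj_of_mem_wagonCore {i k j : Fin n} {x t : V} (hx : x ∈ wagonSet G v i j)
    (ht : t ∈ wagonCore v i k j) : G.Adj x t := by
  obtain ⟨m, hm, rfl⟩ := Finset.mem_image.mp ht
  simp only [Finset.mem_sdiff, Finset.mem_Iio, Finset.mem_insert, Finset.mem_singleton,
    not_or] at hm
  exact hx.2.2.2 m hm.1 hm.2.1

lemma adj_apply_of_mem_wagonCore (hinj : v.Injective)
    (hclique : G.IsClique (Set.range v)) {i k j : Fin n} {t : V}
    (ht : t ∈ wagonCore v i k j) : G.Adj (v k) t := by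
  obtain ⟨m, hm, rfl⟩ := Finset.mem_image.mp ht
  simp only [Finset.mem_sdiff, Finset.mem_Iio, Finset.mem_insert, Finset.mem_singleton,
    not_or] at hm
  exact hclique ⟨k, rfl⟩ ⟨m, rfl⟩ (hinj.ne (Ne.symm hm.2.2))

lemma card_union_wagonCore (hinj : v.Injective) {i k j : Fin n} (hij : i < j)
    (hkj : k < j) (hki : k ≠ i) {R : Finset V} (hR : ↑R ⊆ wagonSet G v i j) :
    (R ∪ wagonCore v i k j).card = R.card + (j - 2) := by
  rw [Finset.card_union_of_disjoint, card_wagonCore hinj hij hkj hki]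
  refine Finset.disjoint_left.mpr fun t ht htN => ?_
  obtain ⟨m, -, rfl⟩ := Finset.mem_image.mp htN
  exact (hR ht).1 ⟨m, rfl⟩

lemma isClique_union_wagonCore (hclique : G.IsClique (Set.range v)) {i k j : Fin n}
    {S : Finset V} (hS : ↑S ⊆ wagonSet G v i j) (hSc : G.IsClique (S : Set V)) :
    G.IsClique (↑(S ∪ wagonCore v i k j) : Set V) := by
  have hN : G.IsClique (wagonCore v i k j : Set V) :=
    hclique.subset (by simp [wagonCore])
  rw [Finset.coe_union, IsClique, Set.pairwise_union]
  exact ⟨hSc, hN, fun s hs t ht _ =>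
    ⟨adj_of_mem_wagonCore (hS hs) ht, (adj_of_mem_wagonCore (hS hs) ht).symm⟩⟩

variable {p : ℕ}

theorem adj_of_mem_wagonSet_of_mem (hf1 : _root_.Free P3P2 G) (hf2 : _root_.Free (K1K2Kp p) G)
    (hinj : v.Injective) (hclique : G.IsClique (Set.range v)) {i k j : Fin n} (hij : i < j)
    (hkj : k < j) (hki : k ≠ i) (hjp : (j : ℕ) ≤ p) {S : Finset V} (hS : ↑S ⊆ wagonSet G v i j)
    (hSc : G.IsClique (S : Set V)) (hScard : p + 3 - j ≤ S.card) {z s : V}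
    (hz : z ∈ wagonSet G v k j) (hs : s ∈ S) : G.Adj z s := by
  by_contra hzs
  have hzS : ∀ s' ∈ S.erase s, G.Adj z s' := by
    intro s' hs'
    by_contra hzs'
    exact (Finset.mem_erase.mp hs').1 <| subsingleton_nonadj_of_free_P3P2 hf1
      (hclique ⟨i, rfl⟩ ⟨j, rfl⟩ (hinj.ne hij.ne)) (hz.2.2.2 i hij hki.symm) hz.2.2.1
      (fun h => hz.1 ⟨j, h.symm⟩) hSc (fun t ht h => (hS ht).2.1 h.symm)
      (fun t ht h => (hS ht).2.2.1 h.symm) ⟨(Finset.mem_erase.mp hs').2, hzs'⟩ ⟨hs, hzs⟩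
  have hkS : ∀ t ∈ S, G.Adj (v k) t := fun t ht => ((hS ht).2.2.2 k hkj hki).symm
  have hsub : S.erase s ∪ wagonCore v i k j ⊆ S ∪ wagonCore v i k j :=
    Finset.union_subset_union (S.erase_subset s) le_rfl
  refine not_free_K1K2Kp (G := G) (T := (S.erase s ∪ wagonCore v i k j : Finset V)) hzs
    hz.2.1 (hkS s hs).symm ((isClique_union_wagonCore hclique hS hSc).subset
    (Finset.coe_subset.mpr hsub)) ?_ ?_ ?_ ?_ hf2
  · rw [card_union_wagonCore hinj hij hkj hki
      ((Finset.coe_subset.mpr (S.erase_subset s)).trans hS), Finset.card_erase_of_mem hs]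
    omega
  · intro t ht
    rcases Finset.mem_union.mp ht with ht | ht
    · exact hzS t ht
    · exact adj_of_mem_wagonCore hz (wagonCore_comm (v := v) i k j ▸ ht)
  · intro t ht
    rcases Finset.mem_union.mp ht with ht | ht
    · exact hSc hs (Finset.mem_erase.mp ht).2 (Finset.mem_erase.mp ht).1.symm
    · exact adj_of_mem_wagonCore (hS hs) ht
  · intro t ht
    rcases Finset.mem_union.mp ht with ht | ht
    · exact hkS t (Finset.mem_of_mem_erase ht)
    · exact adj_apply_of_mem_wagonCore hinj hclique ht

theorem not_adj_of_mem_wagonSet (hf1 : _root_.Free P3P2 G) (hf2 : _root_.Free (K1K2Kp p) G)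
    (hinj : v.Injective) (hclique : G.IsClique (Set.range v)) {i k j : Fin n} (hij : i < j)
    (hkj : k < j) (hki : k ≠ i) (hjp : (j : ℕ) ≤ p) {S : Finset V} (hS : ↑S ⊆ wagonSet G v i j)
    (hSc : G.IsClique (S : Set V)) (hScard : p + 3 - j ≤ S.card) {x y : V}
    (hx : x ∈ wagonSet G v k j) (hy : y ∈ wagonSet G v k j) : ¬ G.Adj x y := by
  intro hxy
  have hadj {z : V} (hz : z ∈ wagonSet G v k j) (t : V) (ht : t ∈ S ∪ wagonCore v i k j) :
      G.Adj z t := by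
    rcases Finset.mem_union.mp ht with ht | ht
    · exact adj_of_mem_wagonSet_of_mem hf1 hf2 hinj hclique hij hkj hki hjp hS hSc hScard hz ht
    · exact adj_of_mem_wagonCore hz (wagonCore_comm (v := v) i k j ▸ ht)
  refine not_free_K1K2Kp (G := G) (T := (S ∪ wagonCore v i k j : Finset V))
    (fun h => hx.2.1 h.symm) (fun h => hy.2.1 h.symm) hxy
    (isClique_union_wagonCore hclique hS hSc) ?_ ?_
    (hadj hx) (hadj hy) hf2
  · rw [card_union_wagonCore hinj hij hkj hki hS]
    omega
  · intro t ht
    rcases Finset.mem_union.mp ht with ht | ht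
    · exact ((hS ht).2.2.2 k hkj hki).symm
    · exact adj_apply_of_mem_wagonCore hinj hclique ht

end

theorem stmt_18_general {V : Type*} (G : SimpleGraph V) (p : ℕ)
    (hf1 : _root_.Free P3P2 G) (hf2 : _root_.Free (K1K2Kp p) G)
    (v : Fin G.cliqueNum → V) (hinj : Function.Injective v)
    (hclique : G.IsClique (Set.range v))
    -- the Wagon partition set C_{i,j} (0-indexed here):
    (C : Fin G.cliqueNum → Fin G.cliqueNum → Set V)
    (hC : ∀ i j, C i j = {x | x ∉ Set.range v ∧ ¬ G.Adj x (v i) ∧ ¬ G.Adj x (v j) ∧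
        ∀ k, k < j → k ≠ i → G.Adj x (v k)})
    (i j : Fin G.cliqueNum) (hij : i < j) (hj : (j : ℕ) + 1 ≤ p + 1)
    (hbig : ∃ S : Set V, S ⊆ C i j ∧ G.IsClique S ∧ p + 3 - (j : ℕ) ≤ S.ncard) :
    ∀ k : Fin G.cliqueNum, k ≠ i → k < j →
      ∀ x ∈ C k j, ∀ y ∈ C k j, ¬ G.Adj x y := by
  classical
  obtain ⟨S, hSC, hSc, hScard⟩ := hbig
  obtain ⟨S, rfl⟩ := (Set.finite_of_ncard_pos (by omega : 0 < S.ncard)).exists_finset_coe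
  rw [Set.ncard_coe_finset] at hScard
  obtain rfl : C = wagonSet G v := funext fun i => funext (hC i)
  intro k hki hkj x hx y hy
  exact not_adj_of_mem_wagonSet hf1 hf2 hinj hclique hij hkj hki (by omega) hSC hSc hScard hx hy

theorem stmt_18 {V : Type*} [Fintype V] (G : SimpleGraph V) (p : ℕ) (hp : 1 ≤ p)
    (hf1 : _root_.Free P3P2 G) (hf2 : _root_.Free (K1K2Kp p) G)
    (hω : p + 2 ≤ G.cliqueNum)
    (v : Fin G.cliqueNum → V) (hinj : Function.Injective v)
    (hclique : G.IsClique (Set.range v))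
    -- the Wagon partition set C_{i,j} (0-indexed here):
    (C : Fin G.cliqueNum → Fin G.cliqueNum → Set V)
    (hC : ∀ i j, C i j = {x | x ∉ Set.range v ∧ ¬ G.Adj x (v i) ∧ ¬ G.Adj x (v j) ∧
        ∀ k, k < j → k ≠ i → G.Adj x (v k)})
    (i j : Fin G.cliqueNum) (hij : i < j) (hj : (j : ℕ) + 1 ≤ p + 1)
    (hbig : ∃ S : Set V, S ⊆ C i j ∧ G.IsClique S ∧ p + 3 - (j : ℕ) ≤ S.ncard) :
    ∀ k : Fin G.cliqueNum, k ≠ i → k < j →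
      ∀ x ∈ C k j, ∀ y ∈ C k j, ¬ G.Adj x y :=
  stmt_18_general G p hf1 hf2 v hinj hclique C hC i j hij hj hbig
end
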